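/- arXiv:2405.13921 — 10 statements merged into one kernel-verified Lean document; each statement's English description precedes it below -/
import Mathlib

section
/- Let s ≥ 1 and p ≥ 2. Suppose A ∈ ℝ^{s×s} and b ∈ ℝ^s satisfy the tall-tree order conditions of order p, i.e. bᵀ A^{j-1} e = 1/j! for all 1 ≤ j ≤ p, where e = (1,…,1)ᵀ ∈ ℝ^s. If R ∈ ℝ^{s×s} is symmetric, R e = b, and the matrix X := R A + Aᵀ R − b bᵀ is positive semidefinite, then X A^{j-1} e = 0 for every 1 ≤ j ≤ ⌊p/2⌋. -/
open Matrix Finset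

lemma nullvec_binid (k : ℕ) (hk : 1 ≤ k) :
    (1:ℝ)/(Nat.factorial k * Nat.factorial k)
      + 2 * ∑ j ∈ Finset.Icc 1 k,
          (-1:ℝ)^j / (Nat.factorial (k+j) * Nat.factorial (k-j)) = 0 := by
  set f : ℕ → ℝ := fun i => (-1:ℝ)^i / (Nat.factorial i * Nat.factorial (2*k - i)) with hf
  have h0 : ∑ i ∈ range (2*k+1), f i = 0 := by
    have h1 : (∑ i ∈ range (2*k+1), (-1:ℤ)^i * (2*k).choose i) = 0 :=
      Int.alternating_sum_range_choose_of_ne (by omega)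
    have h2 : (∑ i ∈ range (2*k+1), (-1:ℝ)^i * (2*k).choose i) = 0 := by
      exact_mod_cast congrArg (fun z : ℤ => (z : ℝ)) h1
    have h3 : ∑ i ∈ range (2*k+1), (-1:ℝ)^i * (2*k).choose i
        = (Nat.factorial (2*k)) * ∑ i ∈ range (2*k+1), f i := by
      rw [Finset.mul_sum]
      refine Finset.sum_congr rfl fun i hi => ?_
      have hi' : i ≤ 2*k := by simp [Finset.mem_range] at hi; omega
      rw [Nat.cast_choose ℝ hi', hf]
      have h4 : (Nat.factorial i : ℝ) * Nat.factorial (2*k - i) ≠ 0 := by positivity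
      field_simp
    have h5 : (Nat.factorial (2*k) : ℝ) ≠ 0 := by positivity
    have := h3 ▸ h2
    exact (mul_eq_zero.mp this).resolve_left h5
  -- split the sum
  have hsplit : ∑ i ∈ range (2*k+1), f i
      = (∑ i ∈ range k, f i) + f k + ∑ i ∈ Finset.Ico (k+1) (2*k+1), f i := by
    rw [Finset.range_eq_Ico,
      ← Finset.sum_Ico_consecutive f (show 0 ≤ k+1 by omega) (show k+1 ≤ 2*k+1 by omega),
      ← Finset.range_eq_Ico, Finset.sum_range_succ]
  -- reflection: sum over range k equals sum over Ico (k+1) (2k+1)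
  have hrefl : ∑ i ∈ range k, f i = ∑ i ∈ Finset.Ico (k+1) (2*k+1), f i := by
    refine Finset.sum_nbij' (fun i => 2*k - i) (fun i => 2*k - i) ?_ ?_ ?_ ?_ ?_
    · intro i hi; simp [Finset.mem_range] at hi; simp [Finset.mem_Ico]; omega
    · intro i hi; simp [Finset.mem_Ico] at hi; simp [Finset.mem_range]; omega
    · intro i hi; simp only [Finset.mem_range] at hi; omega
    · intro i hi; simp only [Finset.mem_Ico] at hi; omega
    · intro i hi
      simp [Finset.mem_range] at hi
      have hsign : (-1:ℝ)^(2*k-i) = (-1:ℝ)^i := by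
        have h1 : (-1:ℝ)^(2*k-i) * (-1:ℝ)^i = 1 := by
          rw [← pow_add, show 2*k-i+i = 2*k by omega, pow_mul]; norm_num
        have h2 : (-1:ℝ)^i * (-1:ℝ)^i = 1 := by
          rw [← pow_add, ← two_mul, pow_mul]; norm_num
        have hne : (-1:ℝ)^i ≠ 0 := by positivity
        exact mul_right_cancel₀ hne (h1.trans h2.symm)
      simp only [hf]
      rw [hsign, show 2*k - (2*k - i) = i by omega, mul_comm]
  -- reindex the upper sum
  have hup : ∑ i ∈ Finset.Ico (k+1) (2*k+1), f i
      = ∑ j ∈ Finset.Icc 1 k, (-1:ℝ)^k * ((-1:ℝ)^j / (Nat.factorial (k+j) * Nat.factorial (k-j))) := by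
    refine Finset.sum_nbij' (fun i => i - k) (fun j => k + j) ?_ ?_ ?_ ?_ ?_
    · intro i hi; simp [Finset.mem_Ico] at hi; simp [Finset.mem_Icc]; omega
    · intro j hj; simp [Finset.mem_Icc] at hj; simp [Finset.mem_Ico]; omega
    · intro i hi; simp only [Finset.mem_Ico] at hi; omega
    · intro j hj; simp only [Finset.mem_Icc] at hj; omega
    · intro i hi
      simp [Finset.mem_Ico] at hi
      simp only [hf]
      rw [show 2*k - i = k - (i-k) by omega]
      conv_lhs => rw [show i = k + (i-k) by omega]
      rw [pow_add, show k + (i - k) - k = i - k by omega]; ring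
  have hfk : f k = (-1:ℝ)^k * (1/(Nat.factorial k * Nat.factorial k)) := by
    simp only [hf]; rw [show 2*k - k = k by omega]; ring
  rw [hsplit, hrefl, hup, hfk, ← Finset.mul_sum] at h0
  have hkne : (-1:ℝ)^k ≠ 0 := by positivity
  have : (-1:ℝ)^k * ((1:ℝ)/(Nat.factorial k * Nat.factorial k)
      + 2 * ∑ j ∈ Finset.Icc 1 k,
          (-1:ℝ)^j / (Nat.factorial (k+j) * Nat.factorial (k-j))) = 0 := by
    rw [mul_add]; linarith [h0]
  exact (mul_eq_zero.mp this).resolve_left hkne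

/-- **Null-vector lemma (Lemma 4.4 / `thm:nullvec`).**
If `(A, b)` satisfies the tall-tree order conditions of order `p ≥ 2`, `R` is symmetric
with `R e = b`, and `X := R A + Aᵀ R − b bᵀ` is positive semidefinite, then
`X A^(j-1) e = 0` for `1 ≤ j ≤ ⌊p/2⌋`. -/
theorem nullvec_lemma {s : ℕ} (hs : 1 ≤ s) {p : ℕ} (hp : 2 ≤ p)
    (A : Matrix (Fin s) (Fin s) ℝ) (b : Fin s → ℝ)
    (e : Fin s → ℝ) (he : e = fun _ => 1)
    (horder : ∀ j : ℕ, 1 ≤ j → j ≤ p →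
      b ⬝ᵥ (A ^ (j - 1)).mulVec e = 1 / (Nat.factorial j : ℝ))
    (R : Matrix (Fin s) (Fin s) ℝ) (hRsymm : R.IsSymm)
    (hRe : R.mulVec e = b)
    (X : Matrix (Fin s) (Fin s) ℝ)
    (hX : X = R * A + Aᵀ * R - vecMulVec b b)
    (hXpsd : X.PosSemidef) :
    ∀ j : ℕ, 1 ≤ j → j ≤ p / 2 → X.mulVec ((A ^ (j - 1)).mulVec e) = 0 := by
  intro k
  induction k using Nat.strong_induction_on with
  | _ k IH =>
  intro hk1 hk2
  have hvsucc : ∀ i : ℕ, A.mulVec ((A^i).mulVec e) = (A^(i+1)).mulVec e := by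
    intro i; rw [Matrix.mulVec_mulVec, ← pow_succ']
  have hμ : ∀ i : ℕ, i + 1 ≤ p → b ⬝ᵥ (A^i).mulVec e = 1/(Nat.factorial (i+1) : ℝ) := by
    intro i hi
    simpa using horder (i+1) (by omega) hi
  have hμ0 : b ⬝ᵥ (A^(0:ℕ)).mulVec e = 1 := by
    rw [hμ 0 (by omega)]; simp [Nat.factorial]
  have hqsym : ∀ i j : ℕ, (A^i).mulVec e ⬝ᵥ R.mulVec ((A^j).mulVec e)
      = (A^j).mulVec e ⬝ᵥ R.mulVec ((A^i).mulVec e) := by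
    intro i j
    rw [Matrix.dotProduct_mulVec, ← Matrix.mulVec_transpose, hRsymm.eq, dotProduct_comm]
  have hq0 : ∀ j : ℕ, (A^j).mulVec e ⬝ᵥ R.mulVec ((A^(0:ℕ)).mulVec e) = b ⬝ᵥ (A^j).mulVec e := by
    intro j
    rw [pow_zero, Matrix.one_mulVec, hRe, dotProduct_comm]
  have hbb : ∀ x y : Fin s → ℝ, x ⬝ᵥ (vecMulVec b b) *ᵥ y = (x ⬝ᵥ b) * (b ⬝ᵥ y) := by
    intro x y
    simp only [Matrix.mulVec, dotProduct, vecMulVec_apply, Finset.mul_sum, Finset.sum_mul]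
    rw [Finset.sum_comm]
    refine Finset.sum_congr rfl fun i _ => Finset.sum_congr rfl fun j _ => by ring
  have hF : ∀ i j : ℕ, (A^i).mulVec e ⬝ᵥ X.mulVec ((A^j).mulVec e)
      = (A^i).mulVec e ⬝ᵥ R.mulVec ((A^(j+1)).mulVec e)
        + (A^(i+1)).mulVec e ⬝ᵥ R.mulVec ((A^j).mulVec e)
        - (b ⬝ᵥ (A^i).mulVec e) * (b ⬝ᵥ (A^j).mulVec e) := by
    intro i j
    rw [hX, Matrix.sub_mulVec, Matrix.add_mulVec, dotProduct_sub, dotProduct_add]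
    congr 1
    congr 1
    · rw [← Matrix.mulVec_mulVec, hvsucc]
    · rw [← Matrix.mulVec_mulVec, Matrix.dotProduct_mulVec, vecMul_transpose, hvsucc]
    · rw [hbb, dotProduct_comm]
  have hrel : ∀ m i : ℕ, i + 2 ≤ k →
      (A^m).mulVec e ⬝ᵥ R.mulVec ((A^(i+1)).mulVec e)
        + (A^(m+1)).mulVec e ⬝ᵥ R.mulVec ((A^i).mulVec e)
        = (b ⬝ᵥ (A^m).mulVec e) * (b ⬝ᵥ (A^i).mulVec e) := by
    intro m i hik
    have hXv : X.mulVec ((A^i).mulVec e) = 0 := by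
      simpa using IH (i+1) (by omega) (by omega) (by omega)
    have h := hF m i
    rw [hXv, dotProduct_zero] at h
    linarith
  have hT : ∀ d r : ℕ, r = k - d → 1 ≤ r →
      (A^(k-1+r)).mulVec e ⬝ᵥ R.mulVec ((A^(k-r)).mulVec e)
        = ∑ j ∈ Finset.Icc r k, (-1:ℝ)^(j-r)
            * ((b ⬝ᵥ (A^(k+j-1)).mulVec e) * (b ⬝ᵥ (A^(k-j-1)).mulVec e)) := by
    intro d
    induction d with
    | zero =>
      intro r hr h1
      have hrk : r = k := by omega
      subst hrk
      rw [Finset.Icc_self, Finset.sum_singleton,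
        show r - r - 1 = 0 by omega, show r - r = 0 by omega, hμ0, hq0,
        show r - 1 + r = r + r - 1 by omega]
      norm_num
    | succ d ihd =>
      intro r hr h1
      have hrk : r < k := by omega
      have step := hrel (k-1+r) (k-r-1) (by omega)
      rw [show k-r-1+1 = k-r by omega] at step
      have ih := ihd (r+1) (by omega) (by omega)
      rw [show k-1+(r+1) = k-1+r+1 by omega, show k-(r+1) = k-r-1 by omega] at ih
      have hins : Finset.Icc r k = insert r (Finset.Icc (r+1) k) := by
        ext x; simp only [Finset.mem_Icc, Finset.mem_insert]; omega
      rw [hins, Finset.sum_insert (by simp [Finset.mem_Icc]), Nat.sub_self, pow_zero, one_mul]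
      have hsum : ∑ j ∈ Finset.Icc (r+1) k, (-1:ℝ)^(j-r)
            * ((b ⬝ᵥ (A^(k+j-1)).mulVec e) * (b ⬝ᵥ (A^(k-j-1)).mulVec e))
          = - ∑ j ∈ Finset.Icc (r+1) k, (-1:ℝ)^(j-(r+1))
            * ((b ⬝ᵥ (A^(k+j-1)).mulVec e) * (b ⬝ᵥ (A^(k-j-1)).mulVec e)) := by
        rw [← Finset.sum_neg_distrib]
        refine Finset.sum_congr rfl fun j hj => ?_
        simp only [Finset.mem_Icc] at hj
        have : (-1:ℝ)^(j-r) = -(-1:ℝ)^(j-(r+1)) := by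
          rw [show j - r = (j-(r+1)) + 1 by omega, pow_succ]; ring
        rw [this]; ring
      rw [hsum, ← ih, show k + r - 1 = k-1+r by omega]
      linarith
  -- the quadratic form vanishes
  have hq1 := hT (k-1) 1 (by omega) le_rfl
  have hquad : (A^(k-1)).mulVec e ⬝ᵥ X.mulVec ((A^(k-1)).mulVec e) = 0 := by
    rw [hF (k-1) (k-1), show k-1+1 = k by omega] at *
    rw [hqsym (k-1) k, hq1]
    have hμk : b ⬝ᵥ (A^(k-1)).mulVec e = 1/(Nat.factorial k : ℝ) := by
      rw [hμ (k-1) (by omega), show k-1+1 = k by omega]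
    rw [hμk]
    have hconv : ∀ j ∈ Finset.Icc 1 k, (-1:ℝ)^(j-1)
          * ((b ⬝ᵥ (A^(k+j-1)).mulVec e) * (b ⬝ᵥ (A^(k-j-1)).mulVec e))
        = -((-1:ℝ)^j / (Nat.factorial (k+j) * Nat.factorial (k-j))) := by
      intro j hj
      simp only [Finset.mem_Icc] at hj
      have h2k : 2 * k ≤ p := by omega
      have hμ1 : b ⬝ᵥ (A^(k+j-1)).mulVec e = 1/(Nat.factorial (k+j) : ℝ) := by
        rw [hμ (k+j-1) (by omega), show k+j-1+1 = k+j by omega]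
      have hμ2 : b ⬝ᵥ (A^(k-j-1)).mulVec e = 1/(Nat.factorial (k-j) : ℝ) := by
        rcases eq_or_lt_of_le hj.2 with hjk | hjk
        · rw [show k-j-1 = 0 by omega, hμ0, show k-j = 0 by omega]
          simp [Nat.factorial]
        · rw [hμ (k-j-1) (by omega), show k-j-1+1 = k-j by omega]
      have hsgn : (-1:ℝ)^(j-1) = -(-1:ℝ)^j := by
        rw [show j = (j-1)+1 by omega, pow_succ, show (j-1)+1-1 = j-1 by omega]; ring
      rw [hμ1, hμ2, hsgn]
      field_simp
    rw [Finset.sum_congr rfl hconv, Finset.sum_neg_distrib]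
    have hb := nullvec_binid k (by omega)
    have hkk : (1:ℝ)/(Nat.factorial k : ℝ) * (1/(Nat.factorial k : ℝ))
        = 1/((Nat.factorial k : ℝ) * (Nat.factorial k : ℝ)) := by
      rw [div_mul_div_comm, one_mul]
    rw [hkk]
    linarith
  exact (hXpsd.dotProduct_mulVec_zero_iff ((A^(k-1)).mulVec e)).mp (by simpa using hquad)
end

section
/- Let s ≥ 1 and p ≥ 2. Suppose A ∈ ℝ^{s×s} and b ∈ ℝ^s satisfy the tall-tree order conditions of order p, i.e. bᵀ A^{j-1} e = 1/j! for all 1 ≤ j ≤ p, where e = (1,…,1)ᵀ ∈ ℝ^s. Let R ∈ ℝ^{s×s} be symmetric with R e = b, set X := R A + Aᵀ R − b bᵀ, and let M be a real matrix with s rows whose column space equals the span of the Krylov vectors {e, A e, A² e, …, A^{s-1} e}. If Mᵀ X M is positive semidefinite, then Mᵀ X A^{j-1} e = 0 for every 1 ≤ j ≤ ⌊p/2⌋. -/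
open Matrix Finset
open scoped Nat

/-!
Write `vₖ = Aᵏ e` and `⟪x, y⟫ = xᵀ X y`. Expanding `X` and telescoping gives
`∑_{i+j=m} (-1)ⁱ ⟪vᵢ, vⱼ⟫ = (1 + (-1)ᵐ) bᵀvₘ₊₁ - ∑_{i+j=m} (-1)ⁱ (bᵀvᵢ)(bᵀvⱼ)`, and for `m + 2 ≤ p`
the order conditions turn the right-hand side into the coefficients of `(1 - 1)^(m+2) / (m+2)!`,
so it vanishes. By Cayley–Hamilton every `vₖ` is some `M cₖ`, so `⟪vᵢ, vⱼ⟫ = cᵢᵀ G cⱼ` with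
`G = Mᵀ X M ⪰ 0`. Inductively, in the identity for `m = 2k` every term with `i ≠ k` vanishes, which
leaves `cₖᵀ G cₖ = 0`; positive semidefiniteness upgrades this to `G cₖ = Mᵀ X vₖ = 0`.
-/

theorem Finset.Nat.sum_antidiagonal_neg_one_pow_telescope {R : Type*} [CommRing R]
    (g : ℕ → ℕ → R) (m : ℕ) :
    ∑ ij ∈ antidiagonal m, (-1) ^ ij.1 * (g ij.1 (ij.2 + 1) + g (ij.1 + 1) ij.2) =
      g 0 (m + 1) + (-1) ^ m * g (m + 1) 0 := by
  induction m generalizing g with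
  | zero => simp
  | succ m ih =>
    rw [Finset.Nat.sum_antidiagonal_succ]
    have hshift := ih fun i j => g (i + 1) j
    simp only [pow_succ, mul_neg_one, neg_mul, sum_neg_distrib, hshift]
    ring

theorem Finset.Nat.sum_antidiagonal_neg_one_pow_div_factorial_mul_factorial
    {K : Type*} [Field K] [CharZero K] {n : ℕ} (hn : n ≠ 0) :
    ∑ ij ∈ antidiagonal n, (-1 : K) ^ ij.1 / (ij.1 ! * ij.2 !) = 0 := by
  have hbinom := (Commute.all (-1 : K) 1).add_pow' n
  rw [neg_add_cancel, zero_pow hn] at hbinom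
  have hterm : ∀ ij ∈ antidiagonal n, (-1 : K) ^ ij.1 / (ij.1 ! * ij.2 !) =
      (n ! : K)⁻¹ * (n.choose ij.1 • ((-1) ^ ij.1 * 1 ^ ij.2)) := by
    intro ij hij
    rw [HasAntidiagonal.mem_antidiagonal] at hij
    subst hij
    have hfact : ((ij.1 + ij.2)! : K) ≠ 0 := Nat.cast_ne_zero.mpr (Nat.factorial_ne_zero _)
    rw [nsmul_eq_mul, Nat.cast_add_choose, one_pow, mul_one]
    field_simp
  rw [sum_congr rfl hterm, ← mul_sum, ← hbinom, mul_zero]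

theorem Finset.Nat.sum_antidiagonal_neg_one_pow_div_factorial_succ_mul_factorial_succ
    {K : Type*} [Field K] [CharZero K] (m : ℕ) :
    ∑ ij ∈ antidiagonal m, (-1 : K) ^ ij.1 / ((ij.1 + 1)! * (ij.2 + 1)!) =
      (1 + (-1) ^ m) / (m + 2)! := by
  have h := sum_antidiagonal_neg_one_pow_div_factorial_mul_factorial (K := K) (m + 1).succ_ne_zero
  rw [Finset.Nat.sum_antidiagonal_succ, Finset.Nat.sum_antidiagonal_succ'] at h
  simp only [pow_succ, pow_zero, Nat.factorial_zero, Nat.cast_one, one_mul, mul_one, mul_neg,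
    neg_div, sum_neg_distrib] at h
  linear_combination -h

theorem Matrix.dotProduct_mulVec_of_eq_mul_add_transpose_mul_sub_vecMulVec
    {R n : Type*} [CommRing R] [Fintype n] {A C X : Matrix n n R} {b : n → R}
    (hX : X = C * A + Aᵀ * C - vecMulVec b b) (x y : n → R) :
    x ⬝ᵥ X *ᵥ y = x ⬝ᵥ C *ᵥ (A *ᵥ y) + (A *ᵥ x) ⬝ᵥ C *ᵥ y - (b ⬝ᵥ x) * (b ⬝ᵥ y) := by
  rw [hX, sub_mulVec, add_mulVec, ← mulVec_mulVec, ← mulVec_mulVec, dotProduct_sub,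
    dotProduct_add, dotProduct_mulVec x Aᵀ, vecMul_transpose, vecMulVec_mulVec, dotProduct_smul,
    dotProduct_mulVec (A *ᵥ x)]
  simp only [op_smul_eq_smul, smul_eq_mul, dotProduct_comm x b]
  ring

theorem Matrix.sum_antidiagonal_neg_one_pow_dotProduct_pow_mulVec {R n : Type*} [CommRing R]
    [Fintype n] [DecidableEq n] {A C X : Matrix n n R} {b e : n → R}
    (hX : X = C * A + Aᵀ * C - vecMulVec b b) (hC : C.IsSymm) (hCe : C *ᵥ e = b) (m : ℕ) :
    ∑ ij ∈ antidiagonal m, (-1) ^ ij.1 * ((A ^ ij.1 *ᵥ e) ⬝ᵥ X *ᵥ (A ^ ij.2 *ᵥ e)) =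
      (1 + (-1) ^ m) * (b ⬝ᵥ A ^ (m + 1) *ᵥ e) -
        ∑ ij ∈ antidiagonal m, (-1) ^ ij.1 * ((b ⬝ᵥ A ^ ij.1 *ᵥ e) * (b ⬝ᵥ A ^ ij.2 *ᵥ e)) := by
  have hA : ∀ i, A *ᵥ (A ^ i *ᵥ e) = A ^ (i + 1) *ᵥ e := fun i => by
    rw [mulVec_mulVec, pow_succ']
  have hCb : ∀ v, e ⬝ᵥ C *ᵥ v = b ⬝ᵥ v := fun v => by
    rw [dotProduct_mulVec, ← mulVec_transpose, hC.eq, hCe]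
  simp_rw [dotProduct_mulVec_of_eq_mul_add_transpose_mul_sub_vecMulVec hX, hA, mul_sub,
    sum_sub_distrib]
  rw [Finset.Nat.sum_antidiagonal_neg_one_pow_telescope
    (fun i j => (A ^ i *ᵥ e) ⬝ᵥ C *ᵥ (A ^ j *ᵥ e)), pow_zero, one_mulVec, hCb,
    dotProduct_comm _ (C *ᵥ e), hCe]
  ring

theorem Matrix.sum_antidiagonal_neg_one_pow_dotProduct_pow_mulVec_eq_zero
    {K n : Type*} [Field K] [CharZero K] [Fintype n] [DecidableEq n] {A C X : Matrix n n K}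
    {b e : n → K} (hX : X = C * A + Aᵀ * C - vecMulVec b b) (hC : C.IsSymm) (hCe : C *ᵥ e = b)
    {m : ℕ} (hβ : ∀ i ≤ m + 1, b ⬝ᵥ A ^ i *ᵥ e = 1 / (i + 1)!) :
    ∑ ij ∈ antidiagonal m, (-1) ^ ij.1 * ((A ^ ij.1 *ᵥ e) ⬝ᵥ X *ᵥ (A ^ ij.2 *ᵥ e)) = 0 := by
  have hprod : ∑ ij ∈ antidiagonal m, (-1) ^ ij.1 * ((b ⬝ᵥ A ^ ij.1 *ᵥ e) * (b ⬝ᵥ A ^ ij.2 *ᵥ e))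
      = (1 + (-1) ^ m) / (m + 2)! := by
    rw [← Finset.Nat.sum_antidiagonal_neg_one_pow_div_factorial_succ_mul_factorial_succ]
    refine sum_congr rfl fun ij hij => ?_
    rw [HasAntidiagonal.mem_antidiagonal] at hij
    rw [hβ _ (by omega), hβ _ (by omega)]
    ring
  rw [sum_antidiagonal_neg_one_pow_dotProduct_pow_mulVec hX hC hCe, hprod, hβ _ le_rfl]
  ring

open Polynomial in
theorem Matrix.pow_mulVec_mem_span_pow_mulVec {R : Type*} [CommRing R] [Nontrivial R] {s : ℕ}
    (A : Matrix (Fin s) (Fin s) R) (v : Fin s → R) (k : ℕ) :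
    (A ^ k) *ᵥ v ∈ Submodule.span R (Set.range fun j : Fin s => (A ^ (j : ℕ)) *ᵥ v) := by
  have hq : (X ^ k %ₘ A.charpoly).degree < s := by
    simpa [A.charpoly_degree_eq_dim] using degree_modByMonic_lt (X ^ k) A.charpoly_monic
  rw [A.pow_eq_aeval_mod_charpoly, aeval_eq_sum_range, sum_mulVec]
  refine Submodule.sum_mem _ fun i _ => ?_
  rw [smul_mulVec]
  by_cases hi : i < s
  · exact Submodule.smul_mem _ _ (Submodule.subset_span ⟨⟨i, hi⟩, rfl⟩)
  · rw [coeff_eq_zero_of_degree_lt (hq.trans_le (by exact_mod_cast not_lt.mp hi)), zero_smul]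
    exact Submodule.zero_mem _

theorem Matrix.PosSemidef.mulVec_eq_zero_of_sum_antidiagonal_eq_zero {n : Type*} [Fintype n]
    {G : Matrix n n ℝ} (hG : G.PosSemidef) (c : ℕ → n → ℝ) {N : ℕ}
    (h : ∀ k < N, ∑ ij ∈ antidiagonal (2 * k), (-1) ^ ij.1 * (c ij.1 ⬝ᵥ G *ᵥ c ij.2) = 0) :
    ∀ k < N, G *ᵥ c k = 0 := by
  intro k
  induction k using Nat.strong_induction_on with
  | _ k ih =>
    intro hk
    have hoff : ∀ ij ∈ antidiagonal (2 * k), ij ≠ (k, k) →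
        (-1) ^ ij.1 * (c ij.1 ⬝ᵥ G *ᵥ c ij.2) = 0 := by
      rintro ⟨i, j⟩ hij hne
      rw [HasAntidiagonal.mem_antidiagonal] at hij
      rcases lt_or_ge i k with hi | hi
      · rw [dotProduct_mulVec, ← mulVec_transpose, ← conjTranspose_eq_transpose_of_trivial,
          hG.isHermitian.eq, ih i hi (hi.trans hk), zero_dotProduct, mul_zero]
      · have hj : j < k := by
          by_contra! hj
          exact hne (Prod.ext (show i = k by omega) (show j = k by omega))
        rw [ih j hj (hj.trans hk), dotProduct_zero, mul_zero]
    have hdiag := h k hk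
    rw [sum_eq_single_of_mem (k, k) (by simp [two_mul]) hoff, mul_eq_zero] at hdiag
    refine (hG.dotProduct_mulVec_zero_iff (c k)).mp ?_
    simpa using hdiag.resolve_left (pow_ne_zero _ (by norm_num))

theorem nullvec_lemma_degenerate_general {s : ℕ} {p : ℕ}
    (A : Matrix (Fin s) (Fin s) ℝ) (b : Fin s → ℝ)
    (e : Fin s → ℝ)
    (horder : ∀ j : ℕ, 1 ≤ j → j ≤ p →
      b ⬝ᵥ (A ^ (j - 1)).mulVec e = 1 / (Nat.factorial j : ℝ))
    (R : Matrix (Fin s) (Fin s) ℝ) (hRsymm : R.IsSymm)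
    (hRe : R.mulVec e = b)
    (X : Matrix (Fin s) (Fin s) ℝ)
    (hX : X = R * A + Aᵀ * R - vecMulVec b b)
    {t : ℕ} (M : Matrix (Fin s) (Fin t) ℝ)
    (hM : Submodule.span ℝ (Set.range Mᵀ) =
      Submodule.span ℝ (Set.range fun j : Fin s => (A ^ (j : ℕ)).mulVec e))
    (hXpsd : (Mᵀ * X * M).PosSemidef) :
    ∀ j : ℕ, 1 ≤ j → j ≤ p / 2 → (Mᵀ * X).mulVec ((A ^ (j - 1)).mulVec e) = 0 := by
  have hcol : ∀ k, ∃ c, M *ᵥ c = A ^ k *ᵥ e := fun k => by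
    have hk := A.pow_mulVec_mem_span_pow_mulVec e k
    rw [← hM] at hk
    change _ ∈ Submodule.span ℝ (Set.range M.col) at hk
    rwa [← range_mulVecLin] at hk
  choose c hc using hcol
  have hgram : ∀ i j, c i ⬝ᵥ (Mᵀ * X * M) *ᵥ c j = (A ^ i *ᵥ e) ⬝ᵥ X *ᵥ (A ^ j *ᵥ e) := by
    intro i j
    rw [← hc, ← hc, ← mulVec_mulVec, ← mulVec_mulVec, dotProduct_mulVec, vecMul_transpose]
  have hnull := hXpsd.mulVec_eq_zero_of_sum_antidiagonal_eq_zero c (N := p / 2) fun k hk => by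
    simp_rw [hgram]
    refine sum_antidiagonal_neg_one_pow_dotProduct_pow_mulVec_eq_zero hX hRsymm hRe fun i hi => ?_
    simpa using horder (i + 1) (by omega) (by omega)
  intro j hj hjp
  rw [← hc, mulVec_mulVec]
  exact hnull (j - 1) (by omega)

/-- **Null-vector lemma in the degenerate case.**
If `(A, b)` satisfies the tall-tree order conditions of order `p ≥ 2`, `R` is symmetric
with `R e = b`, `X := R A + Aᵀ R − b bᵀ`, and `M` is a matrix whose column space equals
the span of the Krylov vectors `e, A e, …, A^(s-1) e`, then `Mᵀ X M ⪰ 0` implies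
`Mᵀ X A^(j-1) e = 0` for `1 ≤ j ≤ ⌊p/2⌋`. -/
theorem nullvec_lemma_degenerate {s : ℕ} (hs : 1 ≤ s) {p : ℕ} (hp : 2 ≤ p)
    (A : Matrix (Fin s) (Fin s) ℝ) (b : Fin s → ℝ)
    (e : Fin s → ℝ) (he : e = fun _ => 1)
    (horder : ∀ j : ℕ, 1 ≤ j → j ≤ p →
      b ⬝ᵥ (A ^ (j - 1)).mulVec e = 1 / (Nat.factorial j : ℝ))
    (R : Matrix (Fin s) (Fin s) ℝ) (hRsymm : R.IsSymm)
    (hRe : R.mulVec e = b)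
    (X : Matrix (Fin s) (Fin s) ℝ)
    (hX : X = R * A + Aᵀ * R - vecMulVec b b)
    {t : ℕ} (M : Matrix (Fin s) (Fin t) ℝ)
    (hM : Submodule.span ℝ (Set.range Mᵀ) =
      Submodule.span ℝ (Set.range fun j : Fin s => (A ^ (j : ℕ)).mulVec e))
    (hXpsd : (Mᵀ * X * M).PosSemidef) :
    ∀ j : ℕ, 1 ≤ j → j ≤ p / 2 → (Mᵀ * X).mulVec ((A ^ (j - 1)).mulVec e) = 0 :=
  nullvec_lemma_degenerate_general A b e horder R hRsymm hRe X hX M hM hXpsd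
end

section
/- Let s ≥ 1, n ≥ 0, A ∈ ℝ^{s×s}, b ∈ ℝ^s, and e = (1,…,1)ᵀ ∈ ℝ^s. Write vⱼ := Aʲ e for j ≥ 0. Suppose: (i) bᵀ vⱼ = 1/(j+1)! for all 0 ≤ j ≤ 2n+1; (ii) R ∈ ℝ^{s×s} is symmetric with R e = b; and (iii) (R A + Aᵀ R − b bᵀ) vₖ = 0 for all 0 ≤ k ≤ n−1. Then R vₙ = Σ_{j=0}^{n} ((−1)ʲ/(n−j)!) (Aᵀ)ʲ b. -/
open Matrix

lemma vecMulVec_mulVec' {s : ℕ} (b v : Fin s → ℝ) :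
    (vecMulVec b b).mulVec v = (b ⬝ᵥ v) • b := by
  ext i
  simp [vecMulVec, mulVec, dotProduct, Finset.mul_sum, mul_comm, mul_left_comm]

lemma mulVec_sum' {s : ℕ} (M : Matrix (Fin s) (Fin s) ℝ) (t : Finset ℕ)
    (f : ℕ → Fin s → ℝ) : M.mulVec (∑ j ∈ t, f j) = ∑ j ∈ t, M.mulVec (f j) := by
  simp only [← Matrix.mulVecLin_apply]
  exact map_sum M.mulVecLin f t

/-- **The key recursion formula** in the proof of the null-vector lemma:
under the order conditions `bᵀ A^j e = 1/(j+1)!` (`0 ≤ j ≤ 2n+1`), symmetry of `R`,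
`R e = b`, and vanishing of `(R A + Aᵀ R − b bᵀ) A^k e` for `k < n`, one has
`R A^n e = ∑_{j=0}^{n} ((−1)^j/(n−j)!) (Aᵀ)^j b`. -/
theorem recursion_formula {s : ℕ} (hs : 1 ≤ s) (n : ℕ)
    (A : Matrix (Fin s) (Fin s) ℝ) (b : Fin s → ℝ)
    (e : Fin s → ℝ) (he : e = fun _ => 1)
    (horder : ∀ j : ℕ, j ≤ 2 * n + 1 →
      b ⬝ᵥ (A ^ j).mulVec e = 1 / (Nat.factorial (j + 1) : ℝ))
    (R : Matrix (Fin s) (Fin s) ℝ) (hRsymm : R.IsSymm)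
    (hRe : R.mulVec e = b)
    (hnull : ∀ k : ℕ, k < n →
      (R * A + Aᵀ * R - vecMulVec b b).mulVec ((A ^ k).mulVec e) = 0) :
    R.mulVec ((A ^ n).mulVec e) =
      ∑ j ∈ Finset.range (n + 1),
        ((-1 : ℝ) ^ j / (Nat.factorial (n - j) : ℝ)) • (Aᵀ ^ j).mulVec b := by
  induction n with
  | zero => simp [hRe]
  | succ n ih =>
    have horder' : ∀ j : ℕ, j ≤ 2 * n + 1 →
        b ⬝ᵥ (A ^ j).mulVec e = 1 / (Nat.factorial (j + 1) : ℝ) := fun j hj =>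
      horder j (by omega)
    have hnull' : ∀ k : ℕ, k < n →
        (R * A + Aᵀ * R - vecMulVec b b).mulVec ((A ^ k).mulVec e) = 0 := fun k hk =>
      hnull k (by omega)
    have IH := ih horder' hnull'
    have h0 := hnull n (Nat.lt_succ_self n)
    rw [sub_mulVec, add_mulVec, vecMulVec_mulVec', sub_eq_zero] at h0
    have hA : (R * A).mulVec ((A ^ n).mulVec e) = R.mulVec ((A ^ (n+1)).mulVec e) := by
      rw [pow_succ']; simp [Matrix.mul_assoc]
    have hord : b ⬝ᵥ (A ^ n).mulVec e = 1 / (Nat.factorial (n + 1) : ℝ) :=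
      horder n (by omega)
    have key : R.mulVec ((A ^ (n+1)).mulVec e)
        = (1 / (Nat.factorial (n + 1) : ℝ)) • b
          - Aᵀ.mulVec (R.mulVec ((A ^ n).mulVec e)) := by
      rw [← hA, ← hord]
      have h1 := congrArg (· - (Aᵀ * R).mulVec ((A ^ n).mulVec e)) h0
      simp only [add_sub_cancel_right] at h1
      rw [h1, ← mulVec_mulVec]
    have hsum : ∑ j ∈ Finset.range (n+1),
          Aᵀ.mulVec ((((-1:ℝ)^j/(Nat.factorial (n-j) : ℝ))) • (Aᵀ^j).mulVec b)
        = -∑ j ∈ Finset.range (n+1),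
            ((-1:ℝ)^(j+1)/(Nat.factorial (n+1-(j+1)) : ℝ)) • (Aᵀ^(j+1)).mulVec b := by
      rw [← Finset.sum_neg_distrib]
      apply Finset.sum_congr rfl
      intro j hj
      rw [Matrix.mulVec_smul, mulVec_mulVec, ← pow_succ', ← neg_smul]
      congr 1
      have h1 : n + 1 - (j + 1) = n - j := by omega
      rw [h1, pow_succ]
      ring
    rw [key, IH, mulVec_sum', hsum, Finset.sum_range_succ' _ (n+1)]
    simp only [pow_zero, Nat.sub_zero, Matrix.one_mulVec]
    abel
end

section
/- For every natural number n, 2 · Σ_{j=0}^{n} (−1)ʲ / ((n−j)! · (n+j+2)!) = 1 / ((n+1)!)². -/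
open Finset

/-- Partial alternating sum of binomial coefficients (telescoping Pascal). -/
lemma alt_partial_sum (m : ℕ) : ∀ k ≤ m,
    (∑ i ∈ range (k + 1), ((-1) ^ i * (m + 1).choose i : ℤ)) = (-1) ^ k * m.choose k := by
  intro k hk
  induction k with
  | zero => simp
  | succ k ih =>
    rw [Finset.sum_range_succ, ih (Nat.le_of_succ_le hk), Nat.choose_succ_succ (m) k]
    push_cast
    ring

lemma alt_choose_sum (n : ℕ) :
    2 * (∑ j ∈ range (n + 1), ((-1) ^ j * (2 * n + 2).choose (n - j) : ℤ)) =
      (2 * n + 2).choose (n + 1) := by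
  have hre : (∑ j ∈ range (n + 1), ((-1) ^ j * (2 * n + 2).choose (n - j) : ℤ)) =
      ∑ j ∈ range (n + 1), ((-1) ^ (n - j) * (2 * n + 2).choose j : ℤ) := by
    rw [← Finset.sum_range_reflect]
    apply Finset.sum_congr rfl
    intro j hj
    have hj' : j ≤ n := Nat.lt_succ_iff.mp (Finset.mem_range.mp hj)
    rw [Nat.add_sub_cancel, Nat.sub_sub_self hj']
  have hsgn : ∀ j ∈ range (n + 1), ((-1) ^ (n - j) * (2 * n + 2).choose j : ℤ) =
      (-1) ^ n * ((-1) ^ j * (2 * n + 2).choose j) := by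
    intro j hj
    have hj' : j ≤ n := Nat.lt_succ_iff.mp (Finset.mem_range.mp hj)
    have : ((-1 : ℤ)) ^ (n - j) * (-1) ^ j = (-1) ^ n := by
      rw [← pow_add, Nat.sub_add_cancel hj']
    have h2 : ((-1 : ℤ)) ^ (n - j) = (-1) ^ n * (-1) ^ j := by
      have hsq : ((-1 : ℤ)) ^ j * (-1) ^ j = 1 := by
        rw [← pow_add, ← two_mul, pow_mul]; norm_num
      calc ((-1 : ℤ)) ^ (n - j) = (-1) ^ (n - j) * ((-1) ^ j * (-1) ^ j) := by
            rw [hsq, mul_one]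
        _ = ((-1) ^ (n - j) * (-1) ^ j) * (-1) ^ j := by ring
        _ = (-1) ^ n * (-1) ^ j := by rw [this]
    rw [h2]; ring
  rw [hre, Finset.sum_congr rfl hsgn, ← Finset.mul_sum]
  have hpart := alt_partial_sum (2 * n + 1) n (by omega)
  have h21 : 2 * n + 1 + 1 = 2 * n + 2 := by omega
  rw [h21] at hpart
  rw [hpart]
  have hsymm : (2 * n + 1).choose (n + 1) = (2 * n + 1).choose n := by
    rw [← Nat.choose_symm (by omega : n + 1 ≤ 2 * n + 1)]
    congr 1; omega
  have : (2 * n + 2).choose (n + 1) = 2 * (2 * n + 1).choose n := by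
    rw [show 2 * n + 2 = (2 * n + 1) + 1 by omega, Nat.choose_succ_succ, hsymm]; omega
  rw [this]
  have : ((-1 : ℤ)) ^ n * ((-1) ^ n * (2 * n + 1).choose n) = (2 * n + 1).choose n := by
    rw [← mul_assoc, ← pow_add, ← two_mul, pow_mul]; norm_num
  rw [this]; push_cast; ring

/-- The combinatorial identity
`2 · ∑_{j=0}^{n} (−1)^j / ((n−j)! (n+j+2)!) = 1/((n+1)!)²`,
the core of the proof of the null-vector lemma. -/
theorem alternating_factorial_sum (n : ℕ) :
    2 * ∑ j ∈ Finset.range (n + 1),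
      (-1 : ℝ) ^ j / ((Nat.factorial (n - j) : ℝ) * (Nat.factorial (n + j + 2) : ℝ)) =
    1 / ((Nat.factorial (n + 1) : ℝ)) ^ 2 := by
  have hfac : ((2 * n + 2).factorial : ℝ) ≠ 0 := by
    exact_mod_cast Nat.factorial_ne_zero _
  have hterm : ∀ j ∈ Finset.range (n + 1),
      (-1 : ℝ) ^ j / ((Nat.factorial (n - j) : ℝ) * (Nat.factorial (n + j + 2) : ℝ)) =
      ((-1) ^ j * ((2 * n + 2).choose (n - j) : ℝ)) / ((2 * n + 2).factorial : ℝ) := by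
    intro j hj
    have hj' : j ≤ n := Nat.lt_succ_iff.mp (Finset.mem_range.mp hj)
    have hle : n - j ≤ 2 * n + 2 := by omega
    have key := Nat.choose_mul_factorial_mul_factorial hle
    have h2 : 2 * n + 2 - (n - j) = n + j + 2 := by omega
    rw [h2] at key
    have hne1 : ((n - j).factorial : ℝ) ≠ 0 := by exact_mod_cast Nat.factorial_ne_zero _
    have hne2 : ((n + j + 2).factorial : ℝ) ≠ 0 := by exact_mod_cast Nat.factorial_ne_zero _
    have keyR : ((2 * n + 2).choose (n - j) : ℝ) * (n - j).factorial * (n + j + 2).factorial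
        = (2 * n + 2).factorial := by exact_mod_cast key
    field_simp
    rw [← keyR]; ring
  rw [Finset.sum_congr rfl hterm, ← Finset.sum_div]
  have hZ := alt_choose_sum n
  have hZR : 2 * (∑ j ∈ Finset.range (n + 1), ((-1 : ℝ) ^ j * ((2 * n + 2).choose (n - j) : ℝ)))
      = ((2 * n + 2).choose (n + 1) : ℝ) := by exact_mod_cast hZ
  rw [← mul_div_assoc, hZR]
  have hle : n + 1 ≤ 2 * n + 2 := by omega
  have key := Nat.choose_mul_factorial_mul_factorial hle
  have h2 : 2 * n + 2 - (n + 1) = n + 1 := by omega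
  rw [h2] at key
  have keyR : ((2 * n + 2).choose (n + 1) : ℝ) * (n + 1).factorial * (n + 1).factorial
      = (2 * n + 2).factorial := by exact_mod_cast key
  have hne : ((n + 1).factorial : ℝ) ≠ 0 := by exact_mod_cast Nat.factorial_ne_zero _
  field_simp
  rw [← keyR]; ring
end

section
/- Let N, D ∈ ℂ[z] be polynomials with deg N ≤ deg D, and let 0 < α ≤ π/2. Define the sector S_α := {0} ∪ {z ∈ ℂ ∖ {0} : |arg(−z)| ≤ α}. Assume D(z) ≠ 0 for every z ∈ S_α, and assume |N(z)| ≤ |D(z)| for every boundary point z of the form z = −y·e^{iα} or z = −y·e^{−iα} with y ≥ 0 real. Then |N(z)| ≤ |D(z)| for every z ∈ S_α. -/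
/-!
Substituting `z = -exp w` turns the sector `S_α` into the horizontal strip `|Im w| ≤ α`, on which
the Phragmén–Lindelöf principle bounds a function by its bound on the two boundary lines, provided
it is bounded as `Re w → ±∞`. For `N / D` these two ends correspond to `z → ∞`, where the ratio is
bounded because `deg N ≤ deg D`, and to `z → 0`, where it is continuous.
-/

open Complex

/-- The closed sector of half-angle `α` opening into the left half-plane:
`S_α = {0} ∪ {z ≠ 0 : |arg(−z)| ≤ α}`. -/
def sector (α : ℝ) : Set ℂ := {0} ∪ {z : ℂ | z ≠ 0 ∧ |Complex.arg (-z)| ≤ α}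

open Filter Set Topology Bornology Asymptotics Polynomial
open scoped Real

theorem Polynomial.div_isBigO_one_cobounded_of_degree_le {𝕜 : Type*} [NormedField 𝕜]
    {P Q : 𝕜[X]} (h : P.degree ≤ Q.degree) :
    (fun x => P.eval x / Q.eval x) =O[cobounded 𝕜] (fun _ => (1 : ℝ)) := by
  obtain ⟨c, hc, hPQ⟩ := (isBigO_cobounded_of_degree_le h).exists_pos
  refine IsBigO.of_bound c ?_
  filter_upwards [hPQ.bound] with x hx
  rw [norm_div, norm_one, mul_one]
  exact div_le_of_le_mul₀ (norm_nonneg _) hc.le hx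

theorem mapsTo_neg_exp_sector {α : ℝ} (hα : α < π) :
    MapsTo (fun w => -exp w) (im ⁻¹' Icc (-α) α) (sector α) := fun w ⟨hlo, hhi⟩ => by
  refine Or.inr ⟨neg_ne_zero.2 (exp_ne_zero w), ?_⟩
  rw [neg_neg, ← log_im, log_exp (by linarith) (by linarith)]
  exact abs_le.2 ⟨hlo, hhi⟩

theorem mapsTo_neg_exp_interior_sector {α : ℝ} (hα : α < π) :
    MapsTo (fun w => -exp w) (im ⁻¹' Ioo (-α) α) (interior (sector α)) := by
  have hopen : IsOpen ((fun w => -exp w) '' (im ⁻¹' Ioo (-α) α)) :=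
    (isOpenMap_neg ℂ).comp isOpenMap_exp _ (isOpen_Ioo.preimage continuous_im)
  exact (mapsTo_image _ _).mono_right <| interior_maximal
    ((mapsTo_neg_exp_sector hα).mono_left (preimage_mono Ioo_subset_Icc_self)).image_subset hopen

theorem Complex.exp_eq_exp_re_mul_exp_im_mul_I (w : ℂ) :
    exp w = ↑(Real.exp w.re) * exp (↑w.im * I) := by
  rw [ofReal_exp, ← exp_add, re_add_im]

theorem PhragmenLindelof.left_sector {E : Type*} [NormedAddCommGroup E] [NormedSpace ℂ E]
    {f : ℂ → E} {α C : ℝ} {z : ℂ} (hα : α < π)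
    (hcont : ContinuousOn f (sector α)) (hd : DifferentiableOn ℂ f (interior (sector α)))
    (hB : ∃ c < π / (2 * α), ∃ B,
      f =O[cobounded ℂ ⊓ 𝓟 (sector α)] fun z => Real.exp (B * ‖z‖ ^ c))
    (hpos : ∀ y : ℝ, 0 ≤ y → ‖f (-(y * exp (α * I)))‖ ≤ C)
    (hneg : ∀ y : ℝ, 0 ≤ y → ‖f (-(y * exp (-α * I)))‖ ≤ C)
    (hz : z ∈ sector α) : ‖f z‖ ≤ C := by
  rcases hz with rfl | ⟨hz₀, harg⟩
  · simpa using hpos 0 le_rfl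
  obtain ⟨ζ, hζ, rfl⟩ : ∃ ζ : ℂ, |ζ.im| ≤ α ∧ -exp ζ = z :=
    ⟨log (-z), by rwa [log_im], by rw [exp_log (neg_ne_zero.2 hz₀), neg_neg]⟩
  have hmaps := mapsTo_neg_exp_sector hα
  have hg : DiffContOnCl ℂ (fun w => f (-exp w)) (im ⁻¹' Ioo (-α) α) := by
    refine ⟨hd.comp differentiable_exp.neg.differentiableOn
      (mapsTo_neg_exp_interior_sector hα), ?_⟩
    refine (hcont.comp continuous_exp.neg.continuousOn hmaps).mono ?_
    exact closure_minimal (preimage_mono Ioo_subset_Icc_self)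
      (isClosed_Icc.preimage continuous_im)
  refine horizontal_strip (f := fun w => f (-exp w)) (z := ζ) hg ?_ ?_ ?_
    (abs_le.1 hζ).1 (abs_le.1 hζ).2
  · obtain ⟨c, hc, B, hO⟩ := hB
    refine ⟨c, by rwa [sub_neg_eq_add, ← two_mul], max B 0, ?_⟩
    rw [← comap_comap, comap_abs_atTop, comap_sup, inf_sup_right]
    have hstrip : Tendsto (fun w => -exp w) (𝓟 (im ⁻¹' Ioo (-α) α)) (𝓟 (sector α)) :=
      (hmaps.mono_left (preimage_mono Ioo_subset_Icc_self)).tendsto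
    refine .sup ?_ <| (hO.comp_tendsto <|
      (tendsto_neg_cobounded.comp tendsto_exp_comap_re_atTop).inf hstrip).trans <|
        .of_norm_eventuallyLE ?_
    · have h0 : Tendsto (fun w => -exp w) (comap re atBot) (𝓝 0) := by
        simpa using tendsto_exp_comap_re_atBot.neg
      refine (((hcont 0 (Or.inl rfl)).tendsto.comp <| h0.inf hstrip).isBigO_one ℝ).trans
        (isBigO_of_le _ fun w => ?_)
      rw [norm_one, Real.norm_of_nonneg (Real.exp_pos _).le, Real.one_le_exp_iff]
      positivity
    · simp only [EventuallyLE, eventually_inf_principal, eventually_comap, Function.comp_apply,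
        Real.norm_of_nonneg (Real.exp_pos _).le, norm_neg, norm_exp, ← Real.exp_mul,
        Real.exp_le_exp]
      filter_upwards [eventually_ge_atTop 0] with x hx w hw _
      rw [hw, abs_of_nonneg hx, mul_comm _ c]
      gcongr; apply le_max_left
  · intro w hw
    have := hneg _ (Real.exp_pos w.re).le
    rwa [exp_eq_exp_re_mul_exp_im_mul_I w, hw, ofReal_neg]
  · intro w hw
    have := hpos _ (Real.exp_pos w.re).le
    rwa [exp_eq_exp_re_mul_exp_im_mul_I w, hw]

theorem max_modulus_sector_general (N D : Polynomial ℂ) (hdeg : N.degree ≤ D.degree)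
    (α : ℝ) (hα : α ≤ Real.pi / 2)
    (hD : ∀ z ∈ sector α, D.eval z ≠ 0)
    (hbd : ∀ y : ℝ, 0 ≤ y →
      ‖N.eval (-(↑y * Complex.exp (↑α * Complex.I)))‖ ≤
        ‖D.eval (-(↑y * Complex.exp (↑α * Complex.I)))‖ ∧
      ‖N.eval (-(↑y * Complex.exp (-↑α * Complex.I)))‖ ≤
        ‖D.eval (-(↑y * Complex.exp (-↑α * Complex.I)))‖) :
    ∀ z ∈ sector α, ‖N.eval z‖ ≤ ‖D.eval z‖ := by
  have hdiff : ∀ z ∈ sector α, DifferentiableAt ℂ (fun z => N.eval z / D.eval z) z :=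
    fun z hz => N.differentiableAt.div D.differentiableAt (hD z hz)
  have hratio : ∀ w, ‖N.eval w‖ ≤ ‖D.eval w‖ → ‖N.eval w / D.eval w‖ ≤ 1 := fun w hw => by
    rw [norm_div]; exact div_le_one_of_le₀ hw (norm_nonneg _)
  intro z hz
  -- `B = 0` makes the growth exponent irrelevant; any `c` below the threshold will do.
  have := PhragmenLindelof.left_sector (by linarith [Real.pi_pos])
    (fun w hw => (hdiff w hw).continuousAt.continuousWithinAt)
    (fun w hw => (hdiff w (interior_subset hw)).differentiableWithinAt)
    ⟨π / (2 * α) - 1, sub_one_lt _, 0, by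
      simpa using (div_isBigO_one_cobounded_of_degree_le hdeg).mono inf_le_left⟩
    (fun y hy => hratio _ (hbd y hy).1) (fun y hy => hratio _ (hbd y hy).2) hz
  rwa [norm_div, div_le_one (norm_pos_iff.2 (hD z hz))] at this

/-- **Maximum modulus on a sector.**  If `deg N ≤ deg D`, `D` has no zeros in the sector
`S_α` (`0 < α ≤ π/2`), and `|N| ≤ |D|` on the two boundary rays `z = −y e^{±iα}`, `y ≥ 0`,
then `|N| ≤ |D|` on all of `S_α`. -/
theorem max_modulus_sector (N D : Polynomial ℂ) (hdeg : N.degree ≤ D.degree)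
    (α : ℝ) (hα0 : 0 < α) (hα : α ≤ Real.pi / 2)
    (hD : ∀ z ∈ sector α, D.eval z ≠ 0)
    (hbd : ∀ y : ℝ, 0 ≤ y →
      ‖N.eval (-(↑y * Complex.exp (↑α * Complex.I)))‖ ≤
        ‖D.eval (-(↑y * Complex.exp (↑α * Complex.I)))‖ ∧
      ‖N.eval (-(↑y * Complex.exp (-↑α * Complex.I)))‖ ≤
        ‖D.eval (-(↑y * Complex.exp (-↑α * Complex.I)))‖) :
    ∀ z ∈ sector α, ‖N.eval z‖ ≤ ‖D.eval z‖ :=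
  max_modulus_sector_general N D hdeg α hα hD hbd
end

section
/- Let N, D ∈ ℝ[X] be real polynomials with D(0) ≠ 0, and let p ≥ 1. Suppose the entire function z ↦ N(z) − e^z · D(z) has a zero of order at least p+1 at z = 0 (i.e. its Taylor coefficients of orders 0 through p all vanish). Define the polynomial E ∈ ℝ[y] by E(y) = |D(iy)|² − |N(iy)|² for y ∈ ℝ (equivalently E(y) = D(iy)·D(−iy) − N(iy)·N(−iy)). Then y^{2(⌊p/2⌋+1)} divides E; in particular E(y) = O(y^{2⌊p/2⌋+2}) as y → 0. -/
/-!
Write `T := N − e^X D` as a formal power series; the Taylor coefficients of `N(z) − e^z D(z)`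
at `0` are those of `T`, so the hypothesis says `X^{p+1} ∣ T`. Since `e^X e^{−X} = 1`, the
series `G(X) := D(X) D(−X) − N(X) N(−X)` equals `−(T(X) N(−X) + e^X D(X) T(−X))`, hence
`X^{p+1} ∣ G`.
As `G` is even its odd coefficients vanish, which upgrades this to `X^{2⌊p/2⌋+2} ∣ G`, and
`E(y) = G(iy)`.
-/

open Polynomial Complex
open scoped PowerSeries ContDiff

section TaylorSeries

variable {𝕜 : Type*} [NontriviallyNormedField 𝕜]

noncomputable def taylorSeriesAtZero (f : 𝕜 → 𝕜) : 𝕜⟦X⟧ :=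
  PowerSeries.mk fun k => iteratedDeriv k f 0 / k.factorial

theorem coeff_taylorSeriesAtZero (f : 𝕜 → 𝕜) (k : ℕ) :
    PowerSeries.coeff k (taylorSeriesAtZero f) = iteratedDeriv k f 0 / k.factorial :=
  PowerSeries.coeff_mk _ _

theorem taylorSeriesAtZero_sub {f g : 𝕜 → 𝕜} (hf : ContDiffAt 𝕜 ∞ f 0)
    (hg : ContDiffAt 𝕜 ∞ g 0) :
    taylorSeriesAtZero (fun z => f z - g z) = taylorSeriesAtZero f - taylorSeriesAtZero g := by
  ext k
  rw [map_sub, coeff_taylorSeriesAtZero, coeff_taylorSeriesAtZero, coeff_taylorSeriesAtZero,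
    iteratedDeriv_fun_sub (hf.of_le (by exact_mod_cast le_top))
      (hg.of_le (by exact_mod_cast le_top)), sub_div]

theorem taylorSeriesAtZero_mul [CharZero 𝕜] {f g : 𝕜 → 𝕜} (hf : ContDiffAt 𝕜 ∞ f 0)
    (hg : ContDiffAt 𝕜 ∞ g 0) :
    taylorSeriesAtZero (fun z => f z * g z) = taylorSeriesAtZero f * taylorSeriesAtZero g := by
  ext k
  rw [coeff_taylorSeriesAtZero, iteratedDeriv_fun_mul (hf.of_le (by exact_mod_cast le_top))
    (hg.of_le (by exact_mod_cast le_top)), PowerSeries.coeff_mul,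
    Finset.Nat.sum_antidiagonal_eq_sum_range_succ_mk, Finset.sum_div]
  refine Finset.sum_congr rfl fun i hi => ?_
  have hik : i ≤ k := Nat.lt_succ_iff.mp (Finset.mem_range.mp hi)
  have hk : (k.factorial : 𝕜) ≠ 0 := Nat.cast_ne_zero.mpr k.factorial_ne_zero
  rw [coeff_taylorSeriesAtZero, coeff_taylorSeriesAtZero, Nat.cast_choose 𝕜 hik]
  field_simp

theorem Polynomial.iteratedDeriv_eval (P : 𝕜[X]) (k : ℕ) :
    iteratedDeriv k (fun z => P.eval z) = fun z => (derivative^[k] P).eval z := by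
  induction k with
  | zero => rfl
  | succ k ih =>
    funext z
    rw [iteratedDeriv_succ, ih, Polynomial.deriv, Function.iterate_succ_apply']

theorem Polynomial.contDiff_eval (P : 𝕜[X]) (n : WithTop ℕ∞) :
    ContDiff 𝕜 n fun z => P.eval z :=
  P.contDiff_aeval n

theorem taylorSeriesAtZero_eval [CharZero 𝕜] (P : 𝕜[X]) :
    taylorSeriesAtZero (fun z => P.eval z) = P := by
  ext k
  rw [coeff_taylorSeriesAtZero, Polynomial.iteratedDeriv_eval, Polynomial.coeff_coe]
  dsimp only
  rw [← coeff_zero_eq_eval_zero, coeff_iterate_derivative, zero_add, Nat.descFactorial_self,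
    nsmul_eq_mul, mul_div_cancel_left₀ _ (Nat.cast_ne_zero.mpr k.factorial_ne_zero)]

end TaylorSeries

theorem taylorSeriesAtZero_cexp : taylorSeriesAtZero Complex.exp = PowerSeries.exp ℂ := by
  ext k
  simp [coeff_taylorSeriesAtZero, iteratedDeriv_eq_iterate, Complex.iter_deriv_exp,
    PowerSeries.coeff_exp]

namespace PowerSeries

variable {A : Type*} [CommRing A]

theorem X_pow_dvd_rescale {n : ℕ} {f : A⟦X⟧} (a : A) (h : X ^ n ∣ f) :
    X ^ n ∣ rescale a f := by
  rw [X_pow_dvd_iff] at h ⊢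
  intro d hd
  rw [coeff_rescale, h d hd, mul_zero]

theorem evalNegHom_evalNegHom (f : A⟦X⟧) : evalNegHom (evalNegHom f) = f := by
  rw [evalNegHom, rescale_rescale, neg_one_mul, neg_neg, rescale_one, RingHom.id_apply]

theorem coeff_eq_zero_of_evalNegHom_eq [NoZeroDivisors A] [CharZero A] {f : A⟦X⟧}
    (hf : evalNegHom f = f) {k : ℕ} (hk : Odd k) : coeff k f = 0 := by
  have hcoeff := congrArg (coeff k) hf
  rwa [evalNegHom, coeff_rescale, hk.neg_one_pow, neg_one_mul, CharZero.neg_eq_self_iff] at hcoeff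

theorem X_pow_two_mul_dvd_of_evalNegHom_eq [NoZeroDivisors A] [CharZero A] {f : A⟦X⟧}
    (hf : evalNegHom f = f) {n : ℕ} (h : X ^ (n + 1) ∣ f) : X ^ (2 * (n / 2 + 1)) ∣ f := by
  rw [X_pow_dvd_iff] at h ⊢
  intro k hk
  by_cases hkn : k < n + 1
  · exact h k hkn
  · exact coeff_eq_zero_of_evalNegHom_eq hf (Nat.odd_iff.mpr (by omega))

theorem evalNegHom_mul_evalNegHom_sub (N D : A⟦X⟧) :
    evalNegHom (D * evalNegHom D - N * evalNegHom N) = D * evalNegHom D - N * evalNegHom N := by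
  simp only [map_sub, map_mul, evalNegHom_evalNegHom]
  ring

theorem X_pow_dvd_mul_evalNegHom_sub [Algebra ℚ A] {n : ℕ} {N D : A⟦X⟧}
    (h : X ^ n ∣ N - exp A * D) : X ^ n ∣ D * evalNegHom D - N * evalNegHom N := by
  set T := N - exp A * D
  have hG : D * evalNegHom D - N * evalNegHom N =
      -(T * evalNegHom N + exp A * D * evalNegHom T) := by
    simp only [T, map_sub, map_mul]
    linear_combination (-(D * evalNegHom D)) * exp_mul_exp_neg_eq_one (A := A)
  rw [hG]
  exact (dvd_add (h.mul_right _) ((X_pow_dvd_rescale (-1) h).mul_left _)).neg_right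

end PowerSeries

theorem Polynomial.coe_comp_C_mul_X {R : Type*} [CommSemiring R] (P : R[X]) (a : R) :
    ((P.comp (C a * X) : R[X]) : R⟦X⟧) = PowerSeries.rescale a P := by
  ext k
  rw [Polynomial.coeff_coe, PowerSeries.coeff_rescale, Polynomial.comp_C_mul_X_coeff,
    Polynomial.coeff_coe, mul_comm]

theorem Polynomial.X_pow_dvd_of_X_pow_dvd_coe_map {R S : Type*} [CommSemiring R]
    [CommSemiring S] {f : R →+* S} (hf : Function.Injective f) {P : R[X]} {n : ℕ}
    (h : (PowerSeries.X : S⟦X⟧) ^ n ∣ (P.map f : S⟦X⟧)) : X ^ n ∣ P := by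
  rw [Polynomial.X_pow_dvd_iff]
  intro d hd
  apply hf
  simpa using PowerSeries.X_pow_dvd_iff.mp h d hd

theorem Polynomial.map_ofReal_eq_of_eval_eq {E : ℝ[X]} {P : ℂ[X]}
    (h : ∀ y : ℝ, ((E.eval y : ℝ) : ℂ) = P.eval (y : ℂ)) :
    E.map (algebraMap ℝ ℂ) = P := by
  apply Polynomial.eq_of_infinite_eval_eq
  refine (Set.infinite_range_of_injective Complex.ofReal_injective).mono ?_
  rintro _ ⟨y, rfl⟩
  rw [Set.mem_ofPred_eq, ← h y, eval_map_algebraMap]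
  exact aeval_algebraMap_apply_eq_algebraMap_eval (A := ℂ) y E

theorem Polynomial.isBigO_X_pow_of_dvd {𝕜 : Type*} [NormedField 𝕜] {P : 𝕜[X]} {n : ℕ}
    (h : X ^ n ∣ P) : (fun y => P.eval y) =O[nhds 0] fun y => y ^ n := by
  obtain ⟨Q, rfl⟩ := h
  simpa using (Asymptotics.isBigO_refl (fun y : 𝕜 => y ^ n) (nhds 0)).mul
    (Q.continuous.continuousAt.isBigO_one 𝕜)

theorem Epoly_vanishing_order_general (N D : Polynomial ℝ)
    (p : ℕ)
    (hzero : ∀ k ≤ p, iteratedDeriv k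
      (fun z : ℂ => (N.map (algebraMap ℝ ℂ)).eval z -
        Complex.exp z * (D.map (algebraMap ℝ ℂ)).eval z) 0 = 0)
    (E : Polynomial ℝ)
    (hE : ∀ y : ℝ, ((E.eval y : ℝ) : ℂ) =
      (D.map (algebraMap ℝ ℂ)).eval (↑y * Complex.I) *
        (D.map (algebraMap ℝ ℂ)).eval (-(↑y * Complex.I)) -
      (N.map (algebraMap ℝ ℂ)).eval (↑y * Complex.I) *
        (N.map (algebraMap ℝ ℂ)).eval (-(↑y * Complex.I))) :
    (Polynomial.X ^ (2 * (p / 2 + 1)) ∣ E) ∧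
      (fun y : ℝ => E.eval y) =O[nhds 0] fun y : ℝ => y ^ (2 * (p / 2) + 2) := by
  set Nc := N.map (algebraMap ℝ ℂ)
  set Dc := D.map (algebraMap ℝ ℂ)
  have hTaylor : taylorSeriesAtZero (fun z => Nc.eval z - exp z * Dc.eval z) =
      Nc - PowerSeries.exp ℂ * Dc := by
    rw [taylorSeriesAtZero_sub (Nc.contDiff_eval ∞).contDiffAt
        (contDiff_exp.mul (Dc.contDiff_eval ∞)).contDiffAt,
      taylorSeriesAtZero_mul contDiff_exp.contDiffAt (Dc.contDiff_eval ∞).contDiffAt,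
      taylorSeriesAtZero_eval, taylorSeriesAtZero_eval, taylorSeriesAtZero_cexp]
  have hT : PowerSeries.X ^ (p + 1) ∣ (Nc - PowerSeries.exp ℂ * Dc : ℂ⟦X⟧) := by
    refine PowerSeries.X_pow_dvd_iff.mpr fun k hk => ?_
    rw [← hTaylor, coeff_taylorSeriesAtZero, hzero k (Nat.lt_succ_iff.mp hk), zero_div]
  set G : ℂ⟦X⟧ :=
    Dc * PowerSeries.evalNegHom (Dc : ℂ⟦X⟧) - Nc * PowerSeries.evalNegHom (Nc : ℂ⟦X⟧)
  have hG : PowerSeries.X ^ (2 * (p / 2 + 1)) ∣ G :=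
    PowerSeries.X_pow_two_mul_dvd_of_evalNegHom_eq (PowerSeries.evalNegHom_mul_evalNegHom_sub _ _)
      (PowerSeries.X_pow_dvd_mul_evalNegHom_sub hT)
  have hEpoly : E.map (algebraMap ℝ ℂ) =
      Dc.comp (C I * X) * Dc.comp (C (-I) * X) - Nc.comp (C I * X) * Nc.comp (C (-I) * X) := by
    refine Polynomial.map_ofReal_eq_of_eval_eq fun y => ?_
    rw [hE y]
    simp only [eval_sub, eval_mul, eval_comp, eval_C, eval_X, neg_mul, mul_comm I]
  have hEseries :
      ((E.map (algebraMap ℝ ℂ) : ℂ[X]) : ℂ⟦X⟧) = PowerSeries.rescale I G := by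
    rw [hEpoly]
    simp only [G, Polynomial.coe_sub, Polynomial.coe_mul, Polynomial.coe_comp_C_mul_X,
      map_sub, map_mul, PowerSeries.evalNegHom, PowerSeries.rescale_rescale, neg_one_mul]
  have hdvd : X ^ (2 * (p / 2 + 1)) ∣ E := by
    refine Polynomial.X_pow_dvd_of_X_pow_dvd_coe_map (algebraMap ℝ ℂ).injective ?_
    rw [hEseries]
    exact PowerSeries.X_pow_dvd_rescale I hG
  refine ⟨hdvd, ?_⟩
  simpa only [mul_add, mul_one] using Polynomial.isBigO_X_pow_of_dvd hdvd

/-- **Vanishing of the E-polynomial to order `2⌊p/2⌋ + 2`.**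
If `N(z) − e^z D(z)` has a zero of order at least `p + 1` at `z = 0` (all derivatives of
orders `0, …, p` vanish there) and `D(0) ≠ 0`, then the E-polynomial
`E(y) = D(iy)D(−iy) − N(iy)N(−iy)` is divisible by `y^{2(⌊p/2⌋+1)}`; in particular
`E(y) = O(y^{2⌊p/2⌋+2})` as `y → 0`. -/
theorem Epoly_vanishing_order (N D : Polynomial ℝ) (hD0 : D.eval 0 ≠ 0)
    (p : ℕ) (hp : 1 ≤ p)
    (hzero : ∀ k ≤ p, iteratedDeriv k
      (fun z : ℂ => (N.map (algebraMap ℝ ℂ)).eval z -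
        Complex.exp z * (D.map (algebraMap ℝ ℂ)).eval z) 0 = 0)
    (E : Polynomial ℝ)
    (hE : ∀ y : ℝ, ((E.eval y : ℝ) : ℂ) =
      (D.map (algebraMap ℝ ℂ)).eval (↑y * Complex.I) *
        (D.map (algebraMap ℝ ℂ)).eval (-(↑y * Complex.I)) -
      (N.map (algebraMap ℝ ℂ)).eval (↑y * Complex.I) *
        (N.map (algebraMap ℝ ℂ)).eval (-(↑y * Complex.I))) :
    (Polynomial.X ^ (2 * (p / 2 + 1)) ∣ E) ∧
      (fun y : ℝ => E.eval y) =O[nhds 0] fun y : ℝ => y ^ (2 * (p / 2) + 2) :=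
  Epoly_vanishing_order_general N D p hzero E hE
end

section
/- Let m ≥ 1 and let 𝒩ₘ := {N ∈ ℝ^{m×m} : N symmetric and v(y)ᵀ N v(y) = 0 for all y ∈ ℝ}, where v(y) = (1, y, …, y^{m-1})ᵀ. Then 𝒩ₘ has dimension (m−1)(m−2)/2, and a basis is given by the matrices N_{(i,j)} := e_i e_jᵀ + e_j e_iᵀ − e_{⌊(i+j)/2⌋} e_{⌈(i+j)/2⌉}ᵀ − e_{⌈(i+j)/2⌉} e_{⌊(i+j)/2⌋}ᵀ, indexed over pairs (i,j) with 1 ≤ i ≤ m−2 and i+2 ≤ j ≤ m, where e_k denotes the k-th standard unit vector of ℝ^m. -/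
open Matrix

/-- The `k`-th standard unit vector of `ℝ^m`, indexed `1, …, m`. -/
def stdVec (m k : ℕ) : Fin m → ℝ := fun i => if (i : ℕ) + 1 = k then 1 else 0

/-- The basis matrix `N_{(i,j)} = e_i e_jᵀ + e_j e_iᵀ − e_{⌊(i+j)/2⌋} e_{⌈(i+j)/2⌉}ᵀ
− e_{⌈(i+j)/2⌉} e_{⌊(i+j)/2⌋}ᵀ` (1-based indices). -/
def momentNullMat (m i j : ℕ) : Matrix (Fin m) (Fin m) ℝ :=
  vecMulVec (stdVec m i) (stdVec m j) + vecMulVec (stdVec m j) (stdVec m i)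
    - vecMulVec (stdVec m ((i + j) / 2)) (stdVec m ((i + j + 1) / 2))
    - vecMulVec (stdVec m ((i + j + 1) / 2)) (stdVec m ((i + j) / 2))

/-- The index set `1 ≤ i ≤ m − 2`, `i + 2 ≤ j ≤ m`. -/
def momentNullIdx (m : ℕ) : Type :=
  {ij : ℕ × ℕ // 1 ≤ ij.1 ∧ ij.1 ≤ m - 2 ∧ ij.1 + 2 ≤ ij.2 ∧ ij.2 ≤ m}

/-! The matrices `N_{(i,j)}` lie in `𝒩ₘ` because `i + j = ⌊(i+j)/2⌋ + ⌈(i+j)/2⌉`. Conversely, the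
quadratic form of `N` at `v(y)` is the polynomial `∑ᵣ (∑_{a+b=r} N_{ab}) yʳ`, so every matrix in
`𝒩ₘ` has vanishing antidiagonal sums. Each antidiagonal meets the tridiagonal band in a single
diagonal entry or in a pair of transposed entries, so a matrix of `𝒩ₘ` vanishing above the band is
zero. Hence the coordinates `N ↦ N_{ab}` (`b ≥ a + 2`), which send the `N_{(i,j)}` to the standard
basis, are injective on `𝒩ₘ`: this gives linear independence and spanning at once. -/

open Finset Polynomial

section MomentForm

variable {R : Type*} [CommRing R]

def momentVec (m : ℕ) (y : R) : Fin m → R := fun i => y ^ (i : ℕ)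

theorem dotProduct_vecMulVec_mulVec {n : Type*} [Fintype n] (x u w : n → R) :
    x ⬝ᵥ vecMulVec u w *ᵥ x = (x ⬝ᵥ u) * (w ⬝ᵥ x) := by
  rw [vecMulVec_mulVec, dotProduct_smul, MulOpposite.smul_eq_mul_unop, MulOpposite.unop_op,
    mul_comm]

theorem momentVec_dotProduct_mulVec_eq_eval {m : ℕ} (N : Matrix (Fin m) (Fin m) R) (y : R) :
    momentVec m y ⬝ᵥ N *ᵥ momentVec m y =
      (∑ p : Fin m × Fin m, monomial ((p.1 : ℕ) + p.2) (N p.1 p.2)).eval y := by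
  simp only [eval_finsetSum, eval_monomial, Fintype.sum_prod_type, dotProduct, mulVec,
    momentVec, Finset.mul_sum, pow_add]
  exact Finset.sum_congr rfl fun a _ => Finset.sum_congr rfl fun b _ => by ring

theorem sum_antidiagonal_eq_zero_of_momentVec_dotProduct_mulVec [IsDomain R] [Infinite R]
    {m : ℕ} {N : Matrix (Fin m) (Fin m) R} (h : ∀ y, momentVec m y ⬝ᵥ N *ᵥ momentVec m y = 0)
    (r : ℕ) : ∑ p : Fin m × Fin m with (p.1 : ℕ) + p.2 = r, N p.1 p.2 = 0 := by
  have hP : ∑ p : Fin m × Fin m, monomial ((p.1 : ℕ) + p.2) (N p.1 p.2) = 0 :=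
    Polynomial.funext fun y => by rw [← momentVec_dotProduct_mulVec_eq_eval, h, eval_zero]
  simpa [finsetSum_coeff, coeff_monomial, Finset.sum_filter] using congrArg (coeff · r) hP

end MomentForm

theorem Matrix.eq_zero_of_isSymm_of_sum_antidiagonal {M : Type*} [AddCommMonoid M]
    [IsAddTorsionFree M] {m : ℕ} {D : Matrix (Fin m) (Fin m) M} (hD : D.IsSymm)
    (hband : ∀ a b : Fin m, (a : ℕ) + 2 ≤ b → D a b = 0)
    (hsum : ∀ r, ∑ p : Fin m × Fin m with (p.1 : ℕ) + p.2 = r, D p.1 p.2 = 0) : D = 0 := by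
  have hband' : ∀ a b : Fin m, (a : ℕ) + 2 ≤ b ∨ (b : ℕ) + 2 ≤ a → D a b = 0 := by
    rintro a b (h | h)
    · exact hband a b h
    · rw [← hD.apply]; exact hband b a h
  ext a b
  by_cases hab : (a : ℕ) + 2 ≤ b ∨ (b : ℕ) + 2 ≤ a
  · exact hband' a b hab
  have key := hsum (a + b)
  rw [← Finset.sum_subset (s₁ := {(a, b), (b, a)})] at key
  · obtain rfl | hne := eq_or_ne a b
    · simpa using key
    · rw [Finset.sum_pair (mt (congrArg Prod.fst) hne)] at key
      simpa [hD.apply a b, ← two_nsmul] using key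
  · intro p hp
    simp only [Finset.mem_insert, Finset.mem_singleton] at hp
    rcases hp with rfl | rfl <;> simp [add_comm]
  · intro p hp hpab
    simp only [Finset.mem_insert, Finset.mem_singleton, Finset.mem_filter, Finset.mem_univ,
      true_and, Prod.ext_iff, Fin.ext_iff, not_or] at hp hpab
    exact hband' _ _ (by omega)

theorem stdVec_eq_single {m k : ℕ} (hk1 : 1 ≤ k) (hk : k ≤ m) :
    stdVec m k = Pi.single (⟨k - 1, by omega⟩ : Fin m) 1 := by
  ext i
  simp only [stdVec, Pi.single_apply, Fin.ext_iff]
  congr 1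
  apply propext
  omega

theorem momentVec_dotProduct_stdVec {m k : ℕ} (hk1 : 1 ≤ k) (hk : k ≤ m) (y : ℝ) :
    momentVec m y ⬝ᵥ stdVec m k = y ^ (k - 1) := by
  simp [stdVec_eq_single hk1 hk, momentVec]

theorem momentNullMat_isSymm (m i j : ℕ) : (momentNullMat m i j).IsSymm := by
  simp only [IsSymm, momentNullMat, transpose_sub, transpose_add, transpose_vecMulVec]
  abel

theorem momentNullMat_apply_of_add_two_le {m i j : ℕ} (hij : i ≤ j) {a b : Fin m}
    (hab : (a : ℕ) + 2 ≤ b) :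
    momentNullMat m i j a b = if (a : ℕ) + 1 = i ∧ (b : ℕ) + 1 = j then 1 else 0 := by
  simp only [momentNullMat, Matrix.sub_apply, Matrix.add_apply, vecMulVec_apply, stdVec]
  split_ifs <;> first | omega | norm_num

theorem momentVec_dotProduct_momentNullMat_mulVec {m i j : ℕ} (hi : 1 ≤ i) (hij : i ≤ j)
    (hj : j ≤ m) (y : ℝ) : momentVec m y ⬝ᵥ momentNullMat m i j *ᵥ momentVec m y = 0 := by
  simp only [momentNullMat, sub_mulVec, add_mulVec, dotProduct_sub, dotProduct_add,
    dotProduct_vecMulVec_mulVec]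
  simp only [dotProduct_comm _ (momentVec m y)]
  rw [momentVec_dotProduct_stdVec hi (by omega), momentVec_dotProduct_stdVec (by omega) hj,
    momentVec_dotProduct_stdVec (k := (i + j) / 2) (by omega) (by omega),
    momentVec_dotProduct_stdVec (k := (i + j + 1) / 2) (by omega) (by omega)]
  have hexp : y ^ (i - 1) * y ^ (j - 1) = y ^ ((i + j) / 2 - 1) * y ^ ((i + j + 1) / 2 - 1) := by
    rw [← pow_add, ← pow_add]
    congr 1
    omega
  linear_combination 2 * hexp

def momentNullSpace (R : Type*) [CommRing R] (m : ℕ) :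
    Submodule R (Matrix (Fin m) (Fin m) R) where
  carrier := {N | N.IsSymm ∧ ∀ y, momentVec m y ⬝ᵥ N *ᵥ momentVec m y = 0}
  add_mem' := fun ⟨hA, hA'⟩ ⟨hB, hB'⟩ =>
    ⟨hA.add hB, fun y => by rw [add_mulVec, dotProduct_add, hA', hB', add_zero]⟩
  zero_mem' := ⟨isSymm_zero, fun y => by rw [zero_mulVec, dotProduct_zero]⟩
  smul_mem' := fun c _ ⟨hA, hA'⟩ =>
    ⟨hA.smul c, fun y => by rw [smul_mulVec, dotProduct_smul, hA', smul_zero]⟩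

theorem momentNullMat_mem_momentNullSpace {m i j : ℕ} (hi : 1 ≤ i) (hij : i ≤ j)
    (hj : j ≤ m) : momentNullMat m i j ∈ momentNullSpace ℝ m :=
  ⟨momentNullMat_isSymm m i j, momentVec_dotProduct_momentNullMat_mulVec hi hij hj⟩

namespace momentNullIdx

variable {m : ℕ}

theorem bounds (ij : momentNullIdx m) :
    1 ≤ ij.1.1 ∧ ij.1.1 ≤ m - 2 ∧ ij.1.1 + 2 ≤ ij.1.2 ∧ ij.1.2 ≤ m :=
  ij.2

theorem ext_iff {ij kl : momentNullIdx m} : ij = kl ↔ ij.1.1 = kl.1.1 ∧ ij.1.2 = kl.1.2 :=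
  Subtype.ext_iff.trans Prod.ext_iff

def row (ij : momentNullIdx m) : Fin m := ⟨ij.1.1 - 1, by have := ij.bounds; omega⟩

def col (ij : momentNullIdx m) : Fin m := ⟨ij.1.2 - 1, by have := ij.bounds; omega⟩

-- `(i, j) ↦ (j - 2, i - 1)` identifies the index set with `{(b, a) | a < b < m - 1}`.
def finset (m : ℕ) : Finset (ℕ × ℕ) :=
  ((range (m - 1)).sigma range).map
    ⟨fun p => (p.2 + 1, p.1 + 2), show Function.Injective _ by
      rintro ⟨b, a⟩ ⟨b', a'⟩ h
      obtain ⟨rfl, rfl⟩ : a = a' ∧ b = b' := by simpa using h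
      rfl⟩

theorem mem_finset {ij : ℕ × ℕ} :
    ij ∈ finset m ↔ 1 ≤ ij.1 ∧ ij.1 ≤ m - 2 ∧ ij.1 + 2 ≤ ij.2 ∧ ij.2 ≤ m := by
  simp only [finset, mem_map, mem_sigma, mem_range, Function.Embedding.coeFn_mk, Sigma.exists]
  constructor
  · rintro ⟨b, a, ⟨hb, ha⟩, rfl⟩
    omega
  · intro h
    exact ⟨ij.2 - 2, ij.1 - 1, by omega, Prod.ext (by simp only; omega) (by simp only; omega)⟩

instance : Fintype (momentNullIdx m) := Fintype.subtype (finset m) fun _ => mem_finset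

instance : DecidableEq (momentNullIdx m) := inferInstanceAs (DecidableEq (Subtype _))

theorem card_eq : Nat.card (momentNullIdx m) = (m - 1) * (m - 2) / 2 := by
  rw [Nat.card_eq_fintype_card]
  refine (Fintype.subtype_card (finset m) fun _ => mem_finset).trans ?_
  rw [finset, card_map, card_sigma]
  simp only [card_range, sum_range_id, Nat.sub_sub]

theorem exists_row_col {a b : Fin m} (hab : (a : ℕ) + 2 ≤ b) :
    ∃ ij : momentNullIdx m, ij.row = a ∧ ij.col = b :=
  ⟨⟨((a : ℕ) + 1, (b : ℕ) + 1), by omega⟩, Fin.ext (Nat.add_sub_cancel _ _),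
    Fin.ext (Nat.add_sub_cancel _ _)⟩

end momentNullIdx

@[simps]
def momentNullCoords (m : ℕ) : Matrix (Fin m) (Fin m) ℝ →ₗ[ℝ] momentNullIdx m → ℝ where
  toFun N ij := N ij.row ij.col
  map_add' _ _ := rfl
  map_smul' _ _ := rfl

theorem momentNullCoords_momentNullMat {m : ℕ} (kl : momentNullIdx m) :
    momentNullCoords m (momentNullMat m kl.1.1 kl.1.2) = Pi.single kl 1 := by
  ext ij
  have := ij.bounds
  have := kl.bounds
  have hrow_col : (ij.row : ℕ) + 2 ≤ ij.col := by
    simp only [momentNullIdx.row, momentNullIdx.col]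
    omega
  rw [momentNullCoords_apply, Pi.single_apply,
    momentNullMat_apply_of_add_two_le (by omega) hrow_col]
  refine if_congr ?_ rfl rfl
  rw [momentNullIdx.ext_iff]
  simp only [momentNullIdx.row, momentNullIdx.col]
  omega

theorem linearIndependent_momentNullMat (m : ℕ) :
    LinearIndependent ℝ fun ij : momentNullIdx m => momentNullMat m ij.1.1 ij.1.2 := by
  refine .of_comp (momentNullCoords m) ?_
  convert Pi.linearIndependent_single_one (momentNullIdx m) ℝ
  exact momentNullCoords_momentNullMat _

theorem eq_zero_of_mem_momentNullSpace_of_momentNullCoords_eq_zero {m : ℕ}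
    {D : Matrix (Fin m) (Fin m) ℝ} (hD : D ∈ momentNullSpace ℝ m)
    (hc : momentNullCoords m D = 0) : D = 0 := by
  refine eq_zero_of_isSymm_of_sum_antidiagonal hD.1 (fun a b hab => ?_)
    (sum_antidiagonal_eq_zero_of_momentVec_dotProduct_mulVec hD.2)
  obtain ⟨ij, rfl, rfl⟩ := momentNullIdx.exists_row_col hab
  exact congrFun hc ij

theorem span_momentNullMat (m : ℕ) :
    Submodule.span ℝ (Set.range fun ij : momentNullIdx m => momentNullMat m ij.1.1 ij.1.2) =
      momentNullSpace ℝ m := by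
  have hle : Submodule.span ℝ (Set.range fun ij : momentNullIdx m =>
      momentNullMat m ij.1.1 ij.1.2) ≤ momentNullSpace ℝ m := by
    rw [Submodule.span_le]
    rintro _ ⟨ij, rfl⟩
    have := ij.bounds
    exact momentNullMat_mem_momentNullSpace this.1 (by omega) this.2.2.2
  refine le_antisymm hle fun N hN => ?_
  set L := ∑ ij, momentNullCoords m N ij • momentNullMat m ij.1.1 ij.1.2
  have hL : L ∈ Submodule.span ℝ (Set.range fun ij : momentNullIdx m =>
      momentNullMat m ij.1.1 ij.1.2) :=
    Submodule.sum_mem _ fun ij _ => Submodule.smul_mem _ _ (Submodule.subset_span ⟨ij, rfl⟩)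
  have hcoords : momentNullCoords m L = momentNullCoords m N := by
    simp only [L, map_sum, map_smul, momentNullCoords_momentNullMat]
    exact (pi_eq_sum_univ' _).symm
  have hNL := eq_zero_of_mem_momentNullSpace_of_momentNullCoords_eq_zero
    (Submodule.sub_mem _ hN (hle hL)) (by rw [map_sub, hcoords, sub_self])
  rwa [sub_eq_zero.1 hNL]

theorem momentNull_basis_general (m : ℕ) :
    LinearIndependent ℝ (fun ij : momentNullIdx m => momentNullMat m ij.1.1 ij.1.2) ∧
    (∀ N : Matrix (Fin m) (Fin m) ℝ,
      N ∈ Submodule.span ℝ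
        (Set.range fun ij : momentNullIdx m => momentNullMat m ij.1.1 ij.1.2) ↔
      (N.IsSymm ∧ ∀ y : ℝ,
        (fun i : Fin m => y ^ (i : ℕ)) ⬝ᵥ N.mulVec (fun i : Fin m => y ^ (i : ℕ)) = 0)) ∧
    Nat.card (momentNullIdx m) = (m - 1) * (m - 2) / 2 :=
  ⟨linearIndependent_momentNullMat m, fun N => by rw [span_momentNullMat]; rfl,
    momentNullIdx.card_eq⟩

/-- **Basis of the space `𝒩ₘ` of symmetric matrices whose quadratic form vanishes on the
moment vectors `v(y) = (1, y, …, y^{m-1})ᵀ`.**  The matrices `N_{(i,j)}` are linearly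
independent, span exactly `𝒩ₘ`, and their number is `(m−1)(m−2)/2`, which is therefore
the dimension of `𝒩ₘ`. -/
theorem momentNull_basis (m : ℕ) (hm : 1 ≤ m) :
    LinearIndependent ℝ (fun ij : momentNullIdx m => momentNullMat m ij.1.1 ij.1.2) ∧
    (∀ N : Matrix (Fin m) (Fin m) ℝ,
      N ∈ Submodule.span ℝ
        (Set.range fun ij : momentNullIdx m => momentNullMat m ij.1.1 ij.1.2) ↔
      (N.IsSymm ∧ ∀ y : ℝ,
        (fun i : Fin m => y ^ (i : ℕ)) ⬝ᵥ N.mulVec (fun i : Fin m => y ^ (i : ℕ)) = 0)) ∧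
    Nat.card (momentNullIdx m) = (m - 1) * (m - 2) / 2 :=
  momentNull_basis_general m
end

section
/- For every z ∈ ℂ with Re z ≤ 0, |12 + 6z + z²| ≤ |12 − 6z + z²|. -/
/-!
Split the two polynomials as `p ± q` with `p = 12 + z²` and `q = 6z`. Then
`‖p + q‖² - ‖p - q‖² = 4 ⟪p, q⟫_ℝ`, and `⟪12 + z², 6z⟫_ℝ = 6 Re z (12 + |z|²)`,
which is `≤ 0` exactly when `Re z ≤ 0`.
-/

open scoped RealInnerProductSpace

theorem norm_add_le_norm_sub_iff_real_inner_nonpos {E : Type*} [NormedAddCommGroup E]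
    [InnerProductSpace ℝ E] (x y : E) : ‖x + y‖ ≤ ‖x - y‖ ↔ ⟪x, y⟫ ≤ 0 := by
  rw [← sq_le_sq₀ (norm_nonneg _) (norm_nonneg _), norm_add_sq_real, norm_sub_sq_real]
  constructor <;> intro h <;> linarith

theorem Complex.real_inner_twelve_add_sq_six_mul (z : ℂ) :
    ⟪12 + z ^ 2, 6 * z⟫ = 6 * z.re * (12 + ‖z‖ ^ 2) := by
  rw [Complex.inner, Complex.sq_norm, Complex.normSq_apply]
  simp only [map_add, Complex.mul_re, Complex.mul_im, Complex.add_re, Complex.add_im,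
    pow_two, Complex.conj_re, Complex.conj_im, Complex.re_ofNat, Complex.im_ofNat]
  ring

/-- **A-stability of the (2,2) Padé approximant** (the Hammer–Hollingsworth stability
function): `|12 + 6z + z²| ≤ |12 − 6z + z²|` on the closed left half-plane. -/
theorem pade22_A_stable (z : ℂ) (hz : z.re ≤ 0) :
    ‖(12 + 6 * z + z ^ 2 : ℂ)‖ ≤ ‖(12 - 6 * z + z ^ 2 : ℂ)‖ := by
  rw [show (12 + 6 * z + z ^ 2 : ℂ) = (12 + z ^ 2) + 6 * z by ring,
    show (12 - 6 * z + z ^ 2 : ℂ) = (12 + z ^ 2) - 6 * z by ring,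
    norm_add_le_norm_sub_iff_real_inner_nonpos, Complex.real_inner_twelve_add_sq_six_mul]
  exact mul_nonpos_of_nonpos_of_nonneg (by linarith) (by positivity)
end

section
/- Let A = [[1, 0, 0], [1/2, 1, 0], [1, −1, 1]] ∈ ℝ^{3×3}, b = (1, −1, 1)ᵀ, and e = (1,1,1)ᵀ. If R ∈ ℝ^{3×3} is symmetric with R e = b and X := R A + Aᵀ R − b bᵀ is positive semidefinite, then there exists η ∈ ℝ such that R = [[4+η, −3, −η], [−3, 4, −2], [−η, −2, 3+η]]. -/
/-!
Write `X = R A + Aᵀ R − b bᵀ`. For symmetric `R` with `R e = b` one has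
`eᵀ X e = 2 bᵀ A e − (bᵀ e)²`, which vanishes by the order-2 conditions `bᵀ e = 1`,
`bᵀ A e = 1/2`. A positive semidefinite matrix kills every vector on which its quadratic
form vanishes, so `X e = 0`, i.e. `R (A e) = b − Aᵀ b`. For SDIRK(3,2) this is
`R (1, 3/2, 1)ᵀ = (−1/2, 1, 0)ᵀ`; together with `R e = b` and symmetry it leaves one free
parameter.
-/

open Matrix

section

variable {n α : Type*} [Fintype n]

def cstwMatrix [CommRing α] (A R : Matrix n n α) (b : n → α) : Matrix n n α :=
  R * A + Aᵀ * R - vecMulVec b b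

variable [CommRing α] {A R : Matrix n n α} {b e : n → α}

lemma cstwMatrix_mulVec (hRe : R *ᵥ e = b) :
    cstwMatrix A R b *ᵥ e = R *ᵥ (A *ᵥ e) + Aᵀ *ᵥ b - (b ⬝ᵥ e) • b := by
  rw [cstwMatrix, sub_mulVec, add_mulVec, ← mulVec_mulVec, ← mulVec_mulVec, hRe,
    vecMulVec_mulVec, op_smul_eq_smul]

lemma dotProduct_cstwMatrix_mulVec (hR : R.IsSymm) (hRe : R *ᵥ e = b) :
    e ⬝ᵥ cstwMatrix A R b *ᵥ e = 2 * (b ⬝ᵥ A *ᵥ e) - (b ⬝ᵥ e) ^ 2 := by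
  have heR : e ᵥ* R = b := by rw [← mulVec_transpose, hR.eq, hRe]
  rw [cstwMatrix_mulVec hRe, dotProduct_sub, dotProduct_add, dotProduct_mulVec, heR,
    mulVec_transpose, dotProduct_comm e, ← dotProduct_mulVec, dotProduct_smul,
    dotProduct_comm e, smul_eq_mul]
  ring

end

section

variable {n : Type*} [Fintype n] {A R : Matrix n n ℝ} {b e : n → ℝ}

lemma cstwMatrix_mulVec_eq_zero (hR : R.IsSymm) (hRe : R *ᵥ e = b) (hbe : b ⬝ᵥ e = 1)
    (hbAe : b ⬝ᵥ A *ᵥ e = 1 / 2) (hX : (cstwMatrix A R b).PosSemidef) :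
    cstwMatrix A R b *ᵥ e = 0 :=
  (hX.dotProduct_mulVec_zero_iff e).1 <| by
    rw [star_trivial, dotProduct_cstwMatrix_mulVec hR hRe, hbe, hbAe]
    norm_num

lemma mulVec_mulVec_eq_of_cstwMatrix_posSemidef (hR : R.IsSymm) (hRe : R *ᵥ e = b)
    (hbe : b ⬝ᵥ e = 1) (hbAe : b ⬝ᵥ A *ᵥ e = 1 / 2) (hX : (cstwMatrix A R b).PosSemidef) :
    R *ᵥ (A *ᵥ e) = b - Aᵀ *ᵥ b := by
  have hXe := cstwMatrix_mulVec_eq_zero hR hRe hbe hbAe hX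
  rw [cstwMatrix_mulVec hRe, hbe, one_smul, sub_eq_zero] at hXe
  exact eq_sub_of_add_eq hXe

end

lemma exists_eq_of_isSymm_of_mulVec_eq (R : Matrix (Fin 3) (Fin 3) ℝ) (hR : R.IsSymm)
    (hRe : R *ᵥ ![1, 1, 1] = ![1, -1, 1]) (hRc : R *ᵥ ![1, 3 / 2, 1] = ![-1 / 2, 1, 0]) :
    ∃ η : ℝ, R = !![4 + η, -3, -η; -3, 4, -2; -η, -2, 3 + η] := by
  have h01 := hR.apply 0 1
  have h02 := hR.apply 0 2
  have h12 := hR.apply 1 2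
  norm_num [funext_iff, Fin.forall_fin_succ, mulVec, vecHead, vecTail] at hRe hRc
  obtain ⟨e0, e1, e2⟩ := hRe
  obtain ⟨c0, c1, c2⟩ := hRc
  -- the difference of the two equations gives the middle column: `R (0, 1/2, 0)ᵀ = (−3/2, 2, −1)ᵀ`
  refine ⟨-R 0 2, ?_⟩
  ext i j
  fin_cases i <;> fin_cases j <;> simp <;> linarith

/-- **Reduction of the CSTW feasible set for SDIRK(3,2).**
For the SDIRK(3,2) coefficients, any symmetric `R` with `R e = b` and
`X := R A + Aᵀ R − b bᵀ ⪰ 0` lies in a one-parameter family. -/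
theorem sdirk32_feasible_set
    (A : Matrix (Fin 3) (Fin 3) ℝ)
    (hA : A = !![1, 0, 0; 1/2, 1, 0; 1, -1, 1])
    (b : Fin 3 → ℝ) (hb : b = ![1, -1, 1])
    (e : Fin 3 → ℝ) (he : e = ![1, 1, 1])
    (R : Matrix (Fin 3) (Fin 3) ℝ) (hRsymm : R.IsSymm) (hRe : R.mulVec e = b)
    (hXpsd : (R * A + Aᵀ * R - vecMulVec b b).PosSemidef) :
    ∃ η : ℝ, R = !![4 + η, -3, -η; -3, 4, -2; -η, -2, 3 + η] := by
  subst hA hb he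
  have hAe : !![(1 : ℝ), 0, 0; 1/2, 1, 0; 1, -1, 1] *ᵥ ![1, 1, 1] = ![1, 3 / 2, 1] := by
    ext i; fin_cases i <;> norm_num [mulVec]
  have hAb : (![1, -1, 1] : Fin 3 → ℝ) - !![(1 : ℝ), 0, 0; 1/2, 1, 0; 1, -1, 1]ᵀ *ᵥ ![1, -1, 1] =
      ![-1 / 2, 1, 0] := by
    ext i; fin_cases i <;> norm_num [mulVec]
  have hRc := mulVec_mulVec_eq_of_cstwMatrix_posSemidef hRsymm hRe
    (by norm_num) (by norm_num [hAe]) hXpsd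
  rw [hAe, hAb] at hRc
  exact exists_eq_of_isSymm_of_mulVec_eq R hRsymm hRe hRc
end

section
/- Let A ∈ ℝ^{5×5} be the SDIRK(5,4) Butcher matrix with rows (1/4, 0, 0, 0, 0), (1/2, 1/4, 0, 0, 0), (17/50, −1/25, 1/4, 0, 0), (371/1360, −137/2720, 15/544, 1/4, 0), (25/24, −49/48, 125/16, −85/12, 1/4), let b = (25/24, −49/48, 125/16, −85/12, 1/4)ᵀ, and let e = (1,1,1,1,1)ᵀ. Then the method is A-stable: for every z ∈ ℂ with Re z ≤ 0, |det(I − zA + z e bᵀ)| ≤ |det(I − zA)|. -/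
/-!
`A` is lower triangular with constant diagonal `1/4`, so `D(z) = (1 - z/4)^5`, and expanding
gives `N(z) = 1 - z/4 - z²/8 + z³/96 + 7z⁴/768`. For `z = -u + y i` the gap `|D(z)|² - |N(z)|²`
is a polynomial in `u` and `y` that equals the E-polynomial `y⁶(9y⁴ - 64y² + 512) / 3072²` at
`u = 0`, and every monomial containing `u` has a positive coefficient. So for `u ≥ 0` the gap is
at least its value on the imaginary axis, which is nonnegative. This monotonicity replaces the
maximum modulus principle.
-/

open Matrix Complex

theorem det_one_sub_smul_of_isLowerTriangular {R s : Type*} [CommRing R] [Fintype s]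
    [DecidableEq s] [LinearOrder s] {A : Matrix s s R} (hA : A.IsLowerTriangular) {γ : R}
    (hγ : ∀ i, A i i = γ) (z : R) :
    (1 - z • A).det = (1 - z * γ) ^ Fintype.card s := by
  have hT : (1 - z • A).IsLowerTriangular :=
    blockTriangular_one.sub fun i j hij => by simp [hA hij]
  simp [det_of_isLowerTriangular _ hT, one_apply, hγ]

noncomputable def sdirk54A : Matrix (Fin 5) (Fin 5) ℝ :=
  !![1/4, 0, 0, 0, 0;
     1/2, 1/4, 0, 0, 0;
     17/50, -1/25, 1/4, 0, 0;
     371/1360, -137/2720, 15/544, 1/4, 0;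
     25/24, -49/48, 125/16, -85/12, 1/4]

noncomputable def sdirk54b : Fin 5 → ℝ := ![25/24, -49/48, 125/16, -85/12, 1/4]

noncomputable def sdirk54Num (z : ℂ) : ℂ := 1 - z / 4 - z ^ 2 / 8 + z ^ 3 / 96 + 7 * z ^ 4 / 768

noncomputable def sdirk54Den (z : ℂ) : ℂ := (1 - z / 4) ^ 5

noncomputable def sdirk54Gap (z : ℂ) : ℝ := normSq (sdirk54Den z) - normSq (sdirk54Num z)

theorem sdirk54A_isLowerTriangular : sdirk54A.IsLowerTriangular := by
  intro i j hij
  rw [OrderDual.toDual_lt_toDual] at hij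
  fin_cases i <;> fin_cases j <;> first | rfl | simp at hij

theorem det_one_sub_smul_sdirk54A (z : ℂ) :
    (1 - z • sdirk54A.map ofReal).det = sdirk54Den z := by
  have hA : (sdirk54A.map ofReal).IsLowerTriangular := fun i j hij => by
    simp [sdirk54A_isLowerTriangular hij]
  rw [det_one_sub_smul_of_isLowerTriangular hA (γ := 1 / 4)]
  · simp [sdirk54Den, div_eq_mul_inv]
  · intro i
    fin_cases i <;> simp [sdirk54A]

theorem det_one_sub_smul_sdirk54A_add_smul (z : ℂ) :
    (1 - z • sdirk54A.map ofReal + z • (vecMulVec ![1, 1, 1, 1, 1] sdirk54b).map ofReal).det =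
      sdirk54Num z := by
  simp [det_succ_row_zero, Fin.sum_univ_succ, Fin.succAbove, sdirk54A, sdirk54b, sdirk54Num,
    one_apply]
  ring

theorem sdirk54Gap_mul_I (y : ℝ) :
    sdirk54Gap (y * I) = y ^ 6 * (9 * y ^ 4 - 64 * y ^ 2 + 512) / 3072 ^ 2 := by
  simp only [sdirk54Gap, sdirk54Den, sdirk54Num, normSq_apply, add_re, add_im, sub_re, sub_im,
    mul_re, mul_im, div_re, div_im, I_re, I_im, ofReal_re, ofReal_im, re_ofNat, im_ofNat, one_re,
    one_im, pow_succ, pow_zero, one_mul]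
  ring

theorem sdirk54Gap_mul_I_le_sdirk54Gap {u : ℝ} (hu : 0 ≤ u) (y : ℝ) :
    sdirk54Gap (y * I) ≤ sdirk54Gap (-u + y * I) := by
  rw [← sub_nonneg]
  simp only [sdirk54Gap, sdirk54Den, sdirk54Num, normSq_apply, add_re, add_im, sub_re, sub_im,
    mul_re, mul_im, div_re, div_im, neg_re, neg_im, I_re, I_im, ofReal_re, ofReal_im, re_ofNat,
    im_ofNat, one_re, one_im, pow_succ, pow_zero, one_mul]
  ring_nf
  positivity

theorem sdirk54Gap_nonneg {z : ℂ} (hz : z.re ≤ 0) : 0 ≤ sdirk54Gap z := by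
  obtain ⟨u, y, hu, rfl⟩ : ∃ u y : ℝ, 0 ≤ u ∧ z = -u + y * I :=
    ⟨-z.re, z.im, neg_nonneg.mpr hz, by simp [re_add_im]⟩
  have hE : 0 ≤ y ^ 6 * (9 * y ^ 4 - 64 * y ^ 2 + 512) / 3072 ^ 2 := by
    rw [show 9 * y ^ 4 - 64 * y ^ 2 + 512 = (3 * y ^ 2 - 32 / 3) ^ 2 + 3584 / 9 by ring]
    positivity
  calc 0 ≤ sdirk54Gap (y * I) := (sdirk54Gap_mul_I y).symm ▸ hE
    _ ≤ sdirk54Gap (-u + y * I) := sdirk54Gap_mul_I_le_sdirk54Gap hu y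

theorem norm_sdirk54Num_le_norm_sdirk54Den {z : ℂ} (hz : z.re ≤ 0) :
    ‖sdirk54Num z‖ ≤ ‖sdirk54Den z‖ := by
  rw [norm_def, norm_def]
  exact Real.sqrt_le_sqrt (sub_nonneg.mp (sdirk54Gap_nonneg hz))

/-- **A-stability of SDIRK(5,4):** `|det(I − zA + z e bᵀ)| ≤ |det(I − zA)|` for all
`z` in the closed left half-plane. -/
theorem sdirk54_A_stable
    (A : Matrix (Fin 5) (Fin 5) ℝ)
    (hA : A = !![1/4, 0, 0, 0, 0;
                 1/2, 1/4, 0, 0, 0;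
                 17/50, -1/25, 1/4, 0, 0;
                 371/1360, -137/2720, 15/544, 1/4, 0;
                 25/24, -49/48, 125/16, -85/12, 1/4])
    (b : Fin 5 → ℝ) (hb : b = ![25/24, -49/48, 125/16, -85/12, 1/4])
    (e : Fin 5 → ℝ) (he : e = ![1, 1, 1, 1, 1]) :
    ∀ z : ℂ, z.re ≤ 0 →
      ‖(1 - z • A.map Complex.ofReal + z • (vecMulVec e b).map Complex.ofReal).det‖ ≤
        ‖(1 - z • A.map Complex.ofReal).det‖ := by
  obtain rfl : A = sdirk54A := hA
  obtain rfl : b = sdirk54b := hb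
  subst he
  intro z hz
  rw [det_one_sub_smul_sdirk54A_add_smul, det_one_sub_smul_sdirk54A]
  exact norm_sdirk54Num_le_norm_sdirk54Den hz
end
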